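/- arXiv:1508.01953 — 7 statements merged into one kernel-verified Lean document; each statement's English description precedes it below -/
import Mathlib

section
/- Let V be a countably infinite set and Φ a subset of the symmetric group Sym(V) that is closed under composition and such that every orbit Φ_x = {φ(x) : φ ∈ Φ} is infinite. Then for every pair of finite subsets F and J of V there exists φ ∈ Φ with φ[F] ∩ J = ∅. -/
/-- Let `V` be a countably infinite set and `Φ` a subset of `Sym(V)` closed
under composition such that every orbit `Φ_x = {φ x : φ ∈ Φ}` is infinite. Then for every pair
of finite subsets `F` and `J` of `V` there exists `φ ∈ Φ` with `φ[F] ∩ J = ∅`. -/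
theorem stmt0 {V : Type*} [Countable V] [Infinite V] (Φ : Set (Equiv.Perm V))
    (hcomp : ∀ φ ∈ Φ, ∀ ψ ∈ Φ, (φ * ψ : Equiv.Perm V) ∈ Φ)
    (horb : ∀ x : V, {y : V | ∃ φ ∈ Φ, φ x = y}.Infinite)
    (F J : Finset V) :
    ∃ φ ∈ Φ, ∀ x ∈ F, φ x ∉ J := by
  classical
  have hΦne : ∃ φ, φ ∈ Φ := by
    obtain ⟨v⟩ := (inferInstance : Nonempty V)
    obtain ⟨y, φ, hφ, -⟩ := (horb v).nonempty
    exact ⟨φ, hφ⟩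
  suffices h : ∀ (n : ℕ) (F J : Finset V), F.card ≤ n → ∃ φ ∈ Φ, ∀ x ∈ F, φ x ∉ J by
    exact h F.card F J le_rfl
  intro n
  induction n with
  | zero =>
    intro F J hF
    obtain ⟨φ, hφ⟩ := hΦne
    have hFe : F = ∅ := Finset.card_eq_zero.mp (Nat.le_zero.mp hF)
    subst hFe
    exact ⟨φ, hφ, fun x hx => absurd hx (Finset.notMem_empty x)⟩
  | succ n ih =>
    intro F J hF
    rcases Finset.eq_empty_or_nonempty F with rfl | ⟨a, ha⟩
    · obtain ⟨φ, hφ⟩ := hΦne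
      exact ⟨φ, hφ, fun x hx => absurd hx (Finset.notMem_empty x)⟩
    by_contra hcon
    push_neg at hcon
    -- hcon : ∀ φ ∈ Φ, ∃ x ∈ F, φ x ∈ J
    set F' : Finset V := F.erase a with hF'def
    have hF'card : F'.card ≤ n := by
      have h1 : F'.card = F.card - 1 := Finset.card_erase_of_mem ha
      omega
    have IH' : ∀ K : Finset V, ∃ φ ∈ Φ, ∀ x ∈ F', φ x ∉ K := fun K => ih F' K hF'card
    choose pick pickΦ pickavoid using IH'
    let g : ℕ → Finset V := fun k =>
      Nat.rec (motive := fun _ => Finset V) (∅ : Finset V)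
        (fun _ A => A ∪ F'.image (pick (J ∪ A))) k
    let c : ℕ → Equiv.Perm V := fun k => pick (J ∪ g k)
    have hcΦ : ∀ k, c k ∈ Φ := fun k => pickΦ _
    have hcavoid : ∀ k, ∀ x ∈ F', c k x ∉ J ∪ g k := fun k => pickavoid _
    have hgsucc : ∀ k, g (k + 1) = g k ∪ F'.image (c k) := fun k => rfl
    have hgmono : ∀ j k, j ≤ k → g j ⊆ g k := by
      intro j k hjk
      induction hjk with
      | refl => exact subset_rfl
      | step h ih2 =>
        exact ih2.trans (by rw [hgsucc]; exact Finset.subset_union_left)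
    have himg : ∀ j k, j < k → ∀ x ∈ F', c j x ∈ g k := by
      intro j k hjk x hx
      have h1 : c j x ∈ g (j + 1) := by
        rw [hgsucc]
        exact Finset.mem_union_right _ (Finset.mem_image_of_mem _ hx)
      exact hgmono (j + 1) k hjk h1
    have hinj : ∀ j k, j < k → ∀ x ∈ F', ∀ y ∈ F', c j x ≠ c k y := by
      intro j k hjk x hx y hy hEq
      exact hcavoid k y hy (Finset.mem_union_right _ (hEq ▸ himg j k hjk x hx))
    have hbJ : ∀ k, c k a ∈ J := by
      intro k
      obtain ⟨x, hxF, hxJ⟩ := hcon (c k) (hcΦ k)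
      rcases eq_or_ne x a with heq | hxa
      · exact heq ▸ hxJ
      · exact absurd (Finset.mem_union_left _ hxJ)
          (hcavoid k x (Finset.mem_erase.mpr ⟨hxa, hxF⟩))
    obtain ⟨b, hb⟩ :=
      Finite.exists_infinite_fiber (fun k : ℕ => (⟨c k a, hbJ k⟩ : {x // x ∈ J}))
    set S : Set ℕ := (fun k : ℕ => (⟨c k a, hbJ k⟩ : {x // x ∈ J})) ⁻¹' {b} with hSdef
    have hka : ∀ k ∈ S, c k a = (b : V) := by
      intro k hk
      exact congrArg Subtype.val hk
    obtain ⟨y, hyorb, hyJ⟩ := (horb (b : V)).exists_notMem_finset J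
    obtain ⟨η, hηΦ, hηb⟩ := hyorb
    have hx : ∀ k ∈ S, ∃ x ∈ F', η (c k x) ∈ J := by
      intro k hk
      obtain ⟨x, hxF, hxJ⟩ := hcon (η * c k) (hcomp η hηΦ (c k) (hcΦ k))
      rcases eq_or_ne x a with heq | hxa
      · exfalso
        rw [heq] at hxJ
        have h2 : (η * c k) a = y := by
          rw [Equiv.Perm.mul_apply, hka k hk, hηb]
        exact hyJ (h2 ▸ hxJ)
      · exact ⟨x, Finset.mem_erase.mpr ⟨hxa, hxF⟩, hxJ⟩
    choose! xf hxF hxJ using hx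
    have hInjOn : Set.InjOn (fun k => η (c k (xf k))) S := by
      intro j hj k hk hEq
      by_contra hne
      rcases Nat.lt_or_ge j k with h | h
      · exact hinj j k h _ (hxF j hj) _ (hxF k hk) (η.injective hEq)
      · exact hinj k j (lt_of_le_of_ne h (Ne.symm hne)) _ (hxF k hk) _ (hxF j hj)
          (η.injective hEq.symm)
    have hSfin : S.Finite := by
      refine Set.Finite.of_finite_image (J.finite_toSet.subset ?_) hInjOn
      rintro _ ⟨k, hk, rfl⟩
      exact hxJ k hk
    exact hSfin.not_infinite (Set.infinite_coe_iff.mp hb)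
end

section
/- Let V be countably infinite, Φ ⊆ Sym(V) closed under composition with all orbits infinite. Let (H(x))_{x∈V} be independent random variables with values in a measurable space (S,𝒮). For each φ ∈ Φ let g_φ : S → S be measurable and set H_φ(x) := g_φ(H(φ(x))). Assume that for all φ₁, φ₂ ∈ Φ the families (H_{φ₁}(x))_{x∈V} and (H_{φ₂}(x))_{x∈V} have the same distribution. Then every event A such that for some measurable B ⊆ S^V one has A = {(H_φ(x))_{x∈V} ∈ B} up to a P-null set for every φ ∈ Φ, satisfies P[A] ∈ {0,1}. -/
/-!
Approximate `B`, for the common law `μ` of the fields `H_φ`, by a cylinder over a finite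
`F ⊆ V` up to `ε`. Since all `Φ`-orbits are infinite and `Φ` is closed under composition, a
Neumann-type argument yields `φ₁, φ₂ ∈ Φ` with `φ₁ F ∩ φ₂ F = ∅`. The events
`E_i = {H_{φ_i} ∈ cylinder}` then depend on disjoint sets of the independent `H x`, so they are
independent, and each is `ε`-close to `A`. Letting `ε → 0` gives `P A = P A ^ 2`.
-/

open MeasureTheory ProbabilityTheory

open scoped symmDiff ENNReal

theorem Finset.exists_mem_forall_of_forall_finset {ι α : Type*} (K : Finset α)
    {p : ι → α → Prop} (h : ∀ I : Finset ι, ∃ y ∈ K, ∀ i ∈ I, p i y) :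
    ∃ y ∈ K, ∀ i, p i y := by
  classical
  by_contra! hK
  choose i hi using hK
  obtain ⟨y, hy, hI⟩ := h (K.attach.image fun z : K => i z.1 z.2)
  exact hi y hy (hI _ (Finset.mem_image_of_mem _ (Finset.mem_attach K ⟨y, hy⟩)))

section Trapping

open Equiv

variable {V : Type*} {Φ : Set (Perm V)}

def Trapped (Φ : Set (Perm V)) (G K : Finset V) : Prop :=
  ∀ ψ ∈ Φ, ∃ x ∈ G, ψ x ∈ K

/-- Some `ψ ∈ Φ` sends `G \ {x}` outside `K` and its `Φ₀`-preimages; as each `φ * ψ` still maps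
a point of `G` into `K`, that point is `x`, so `ψ x` stays in `K` under all of `Φ₀`. Finiteness
of `K` lets `Φ₀` run over all of `Φ`. -/
theorem exists_forall_apply_mem_of_trapped [DecidableEq V]
    (hcomp : ∀ φ ∈ Φ, ∀ ψ ∈ Φ, φ * ψ ∈ Φ) {G K : Finset V} (hGK : Trapped Φ G K)
    {x : V} (hesc : ∀ K', ¬Trapped Φ (G.erase x) K') :
    ∃ y ∈ K, ∀ φ ∈ Φ, φ y ∈ K := by
  suffices ∀ Φ₀ : Finset Φ, ∃ y ∈ K, ∀ φ ∈ Φ₀, φ.1 y ∈ K by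
    obtain ⟨y, hyK, hy⟩ := K.exists_mem_forall_of_forall_finset this
    exact ⟨y, hyK, fun φ hφ => hy ⟨φ, hφ⟩⟩
  intro Φ₀
  set K' := K ∪ Φ₀.biUnion fun φ => K.image (φ : Perm V).symm
  obtain ⟨ψ, hψ, hψK'⟩ : ∃ ψ ∈ Φ, ∀ z ∈ G.erase x, ψ z ∉ K' := by
    simpa [Trapped] using hesc K'
  have apply_x_mem : ∀ χ ∈ Φ, (∀ z, χ z ∈ K → ψ z ∈ K') → χ x ∈ K := by
    intro χ hχ hχψ
    obtain ⟨z, hzG, hzK⟩ := hGK χ hχ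
    by_cases hzx : z = x
    · exact hzx ▸ hzK
    · exact absurd (hχψ z hzK) (hψK' z (Finset.mem_erase.2 ⟨hzx, hzG⟩))
  refine ⟨ψ x, apply_x_mem ψ hψ fun z hz => Finset.mem_union_left _ hz, fun φ hφ₀ => ?_⟩
  refine apply_x_mem (φ * ψ) (hcomp φ φ.2 ψ hψ) fun z hz => Finset.mem_union_right _ ?_
  exact Finset.mem_biUnion.2 ⟨φ, hφ₀, Finset.mem_image.2 ⟨_, hz, by simp⟩⟩

theorem exists_finite_orbit_of_trapped (hΦ : Φ.Nonempty)
    (hcomp : ∀ φ ∈ Φ, ∀ ψ ∈ Φ, φ * ψ ∈ Φ) (G K : Finset V) (hGK : Trapped Φ G K) :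
    ∃ y, {z | ∃ φ ∈ Φ, φ y = z}.Finite := by
  classical
  induction G using Finset.strongInduction generalizing K with
  | H G ih =>
    obtain ⟨φ₀, hφ₀⟩ := hΦ
    obtain ⟨x, hx, -⟩ := hGK φ₀ hφ₀
    by_cases hesc : ∃ K', Trapped Φ (G.erase x) K'
    · obtain ⟨K', hK'⟩ := hesc
      exact ih _ (Finset.erase_ssubset hx) K' hK'
    · push Not at hesc
      obtain ⟨y, -, hy⟩ := exists_forall_apply_mem_of_trapped hcomp hGK hesc
      exact ⟨y, K.finite_toSet.subset fun _ ⟨φ, hφ, hφy⟩ => hφy ▸ hy φ hφ⟩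

/-- Were `φ₁ F` and `φ₂ F` never disjoint, `F` would be trapped in `φ₀ F`. -/
theorem exists_disjoint_image_image [DecidableEq V] (hΦ : Φ.Nonempty)
    (hcomp : ∀ φ ∈ Φ, ∀ ψ ∈ Φ, φ * ψ ∈ Φ)
    (horb : ∀ x : V, {y : V | ∃ φ ∈ Φ, φ x = y}.Infinite) (F : Finset V) :
    ∃ φ₁ ∈ Φ, ∃ φ₂ ∈ Φ, Disjoint (F.image φ₁) (F.image φ₂) := by
  by_contra! hmeet
  obtain ⟨φ₀, hφ₀⟩ := hΦ
  have hF : Trapped Φ F (F.image φ₀) := fun ψ hψ => by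
    obtain ⟨_, hψF, hφ₀F⟩ := Finset.not_disjoint_iff.1 (hmeet ψ hψ φ₀ hφ₀)
    obtain ⟨x, hx, rfl⟩ := Finset.mem_image.1 hψF
    exact ⟨x, hx, hφ₀F⟩
  obtain ⟨y, hy⟩ := exists_finite_orbit_of_trapped ⟨φ₀, hφ₀⟩ hcomp F _ hF
  exact horb y hy

end Trapping

theorem exists_measure_symmDiff_cylinder_lt {ι : Type*} {α : ι → Type*}
    [∀ i, MeasurableSpace (α i)] (μ : Measure (∀ i, α i)) [IsFiniteMeasure μ]
    {B : Set (∀ i, α i)} (hB : MeasurableSet B) {ε : ℝ≥0∞} (hε : 0 < ε) :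
    ∃ (F : Finset ι) (C : Set (∀ i : F, α i)), MeasurableSet C ∧ μ (B ∆ cylinder F C) < ε := by
  obtain ⟨t, ht, htB⟩ := exists_measure_symmDiff_lt_of_generateFrom_isSetRing (μ := μ)
    isSetRing_measurableCylinders
    ⟨{Set.univ}, Set.countable_singleton _,
      Set.singleton_subset_iff.2 (univ_mem_measurableCylinders α), by simp⟩
    generateFrom_measurableCylinders.symm hB hε
  obtain ⟨F, C, hC, rfl⟩ := (mem_measurableCylinders t).1 ht
  exact ⟨F, C, hC, symmDiff_comm B _ ▸ htB⟩

theorem abs_mul_self_sub_self_le {a b c : ℝ} (ha₀ : 0 ≤ a) (ha₁ : a ≤ 1) (hc₀ : 0 ≤ c)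
    (hc₁ : c ≤ 1) : |a * a - a| ≤ |a - b| + |a - c| + |a - b * c| :=
  calc |a * a - a| = |c * (a - b) + a * (a - c) - (a - b * c)| := by ring_nf
    _ ≤ |c * (a - b)| + |a * (a - c)| + |a - b * c| := by
      grw [abs_sub _ _, abs_add_le]
    _ ≤ |a - b| + |a - c| + |a - b * c| := by
      rw [abs_mul, abs_mul, abs_of_nonneg ha₀, abs_of_nonneg hc₀]
      gcongr
      · exact mul_le_of_le_one_left (abs_nonneg _) hc₁
      · exact mul_le_of_le_one_left (abs_nonneg _) ha₁

theorem Set.symmDiff_inter_subset_union {α : Type*} (s t u : Set α) :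
    s ∆ (t ∩ u) ⊆ s ∆ t ∪ s ∆ u := by
  intro x
  simp only [Set.mem_symmDiff, Set.mem_inter_iff, Set.mem_union]
  tauto

theorem measure_eq_zero_or_one_of_forall_approx_indep {Ω : Type*} [MeasurableSpace Ω]
    {P : Measure Ω} [IsProbabilityMeasure P] {A : Set Ω} (hA : MeasurableSet A)
    (h : ∀ ε > 0, ∃ E₁ E₂ : Set Ω, MeasurableSet E₁ ∧ MeasurableSet E₂ ∧
      P (E₁ ∩ E₂) = P E₁ * P E₂ ∧ P (A ∆ E₁) < ε ∧ P (A ∆ E₂) < ε) :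
    P A = 0 ∨ P A = 1 := by
  have hsq : P.real A * P.real A = P.real A := by
    refine eq_of_forall_dist_le fun δ hδ => ?_
    obtain ⟨E₁, E₂, hE₁, hE₂, hmul, h₁, h₂⟩ := h (ENNReal.ofReal (δ / 4)) (by positivity)
    replace h₁ : P.real (A ∆ E₁) < δ / 4 := ENNReal.toReal_lt_of_lt_ofReal h₁
    replace h₂ : P.real (A ∆ E₂) < δ / 4 := ENNReal.toReal_lt_of_lt_ofReal h₂
    have hmulR : P.real (E₁ ∩ E₂) = P.real E₁ * P.real E₂ := by
      simp only [measureReal_def, hmul, ENNReal.toReal_mul]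
    have close : ∀ {E}, MeasurableSet E → |P.real A - P.real E| ≤ P.real (A ∆ E) :=
      fun hE => abs_measureReal_sub_le_measureReal_symmDiff hA.nullMeasurableSet
        hE.nullMeasurableSet
    have close₁₂ : |P.real A - P.real E₁ * P.real E₂| ≤ P.real (A ∆ E₁) + P.real (A ∆ E₂) :=
      calc _ = |P.real A - P.real (E₁ ∩ E₂)| := by rw [hmulR]
        _ ≤ P.real (A ∆ (E₁ ∩ E₂)) := close (hE₁.inter hE₂)
        _ ≤ P.real (A ∆ E₁ ∪ A ∆ E₂) := measureReal_mono (Set.symmDiff_inter_subset_union _ _ _)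
        _ ≤ _ := measureReal_union_le _ _
    calc dist (P.real A * P.real A) (P.real A)
        ≤ |P.real A - P.real E₁| + |P.real A - P.real E₂| + |P.real A - P.real E₁ * P.real E₂| :=
          abs_mul_self_sub_self_le measureReal_nonneg measureReal_le_one measureReal_nonneg
            measureReal_le_one
      _ ≤ P.real (A ∆ E₁) + P.real (A ∆ E₂) + (P.real (A ∆ E₁) + P.real (A ∆ E₂)) := by
          gcongr
          exacts [close hE₁, close hE₂]
      _ ≤ δ := by linarith
  rcases eq_or_ne (P.real A) 0 with h0 | h0
  · exact .inl ((measureReal_eq_zero_iff (measure_ne_top P A)).1 h0)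
  · exact .inr ((ENNReal.toReal_eq_one_iff _).1 ((mul_eq_left₀ h0).1 hsq))

section Transformed

variable {V Ω S : Type*} [MeasurableSpace Ω] [MeasurableSpace S]

/-- The field `H_φ`, as a random element of `V → S`. -/
def transformedField (g : Equiv.Perm V → S → S) (H : V → Ω → S) (φ : Equiv.Perm V) :
    Ω → V → S :=
  fun ω x => g φ (H (φ x) ω)

variable {g : Equiv.Perm V → S → S} {H : V → Ω → S}

theorem measurable_transformedField (hH : ∀ x, Measurable (H x)) {φ : Equiv.Perm V}
    (hg : Measurable (g φ)) : Measurable (transformedField g H φ) :=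
  measurable_pi_lambda _ fun x => hg.comp (hH (φ x))

theorem ProbabilityTheory.iIndepFun.indepFun_restrict_transformedField [DecidableEq V]
    {P : Measure Ω} (hindep : iIndepFun H P) (hH : ∀ x, Measurable (H x)) {φ₁ φ₂ : Equiv.Perm V}
    (hg₁ : Measurable (g φ₁)) (hg₂ : Measurable (g φ₂)) {F : Finset V}
    (hF : Disjoint (F.image φ₁) (F.image φ₂)) :
    IndepFun (F.restrict ∘ transformedField g H φ₁) (F.restrict ∘ transformedField g H φ₂) P := by
  -- `F.restrict ∘ H_φ` factors through the restriction of `H` to `φ F`.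
  have hθ : ∀ {φ : Equiv.Perm V}, Measurable (g φ) →
      Measurable fun (h : F.image φ → S) (x : F) => g φ (h ⟨φ x, Finset.mem_image_of_mem _ x.2⟩) :=
    fun hg => measurable_pi_lambda _ fun _ => hg.comp (measurable_pi_apply _)
  exact (hindep.indepFun_finset _ _ hF hH).comp (hθ hg₁) (hθ hg₂)

end Transformed

theorem stmt1_general {V : Type*}
    {Ω : Type*} [MeasurableSpace Ω] (P : Measure Ω) [IsProbabilityMeasure P]
    {S : Type*} [MeasurableSpace S]
    (Φ : Set (Equiv.Perm V))
    (hΦne : Φ.Nonempty)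
    (hcomp : ∀ φ ∈ Φ, ∀ ψ ∈ Φ, (φ * ψ : Equiv.Perm V) ∈ Φ)
    (horb : ∀ x : V, {y : V | ∃ φ ∈ Φ, φ x = y}.Infinite)
    (H : V → Ω → S) (hH : ∀ x, Measurable (H x))
    (hindep : ProbabilityTheory.iIndepFun H P)
    (g : Equiv.Perm V → S → S) (hg : ∀ φ ∈ Φ, Measurable (g φ))
    (hdist : ∀ φ₁ ∈ Φ, ∀ φ₂ ∈ Φ,
      Measure.map (fun ω => fun x : V => g φ₁ (H (φ₁ x) ω)) P =
        Measure.map (fun ω => fun x : V => g φ₂ (H (φ₂ x) ω)) P)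
    (A : Set Ω) (hA : MeasurableSet A)
    (B : Set (V → S)) (hB : MeasurableSet B)
    (hinv : ∀ φ ∈ Φ, P (symmDiff A {ω | (fun x : V => g φ (H (φ x) ω)) ∈ B}) = 0) :
    P A = 0 ∨ P A = 1 := by
  classical
  obtain ⟨φ₀, hφ₀⟩ := hΦne
  have hmeas : ∀ φ ∈ Φ, Measurable (transformedField g H φ) :=
    fun φ hφ => measurable_transformedField hH (hg φ hφ)
  set μ := P.map (transformedField g H φ₀)
  replace hinv : ∀ φ ∈ Φ, P (A ∆ (transformedField g H φ ⁻¹' B)) = 0 := hinv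
  have hlaw : ∀ φ ∈ Φ, P.map (transformedField g H φ) = μ := fun φ hφ => hdist φ hφ φ₀ hφ₀
  have : IsProbabilityMeasure μ := Measure.isProbabilityMeasure_map (hmeas φ₀ hφ₀).aemeasurable
  refine measure_eq_zero_or_one_of_forall_approx_indep hA fun ε hε => ?_
  obtain ⟨F, C, hC, hBC⟩ := exists_measure_symmDiff_cylinder_lt μ hB hε
  set T : Set (V → S) := cylinder F C
  obtain ⟨φ₁, hφ₁, φ₂, hφ₂, hF⟩ := exists_disjoint_image_image ⟨φ₀, hφ₀⟩ hcomp horb F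
  have happrox : ∀ φ ∈ Φ, P (A ∆ (transformedField g H φ ⁻¹' T)) < ε := fun φ hφ =>
    calc _ ≤ P (A ∆ (transformedField g H φ ⁻¹' B)) +
          P ((transformedField g H φ ⁻¹' B) ∆ (transformedField g H φ ⁻¹' T)) :=
          measure_symmDiff_le _ _ _
      _ = μ (B ∆ T) := by
        rw [hinv φ hφ, zero_add, ← Set.preimage_symmDiff,
          ← Measure.map_apply (hmeas φ hφ) (hB.symmDiff (hC.cylinder F)), hlaw φ hφ]
      _ < ε := hBC
  have hcyl : ∀ φ ∈ Φ, MeasurableSet (transformedField g H φ ⁻¹' T) :=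
    fun φ hφ => hmeas φ hφ (hC.cylinder F)
  exact ⟨_, _, hcyl φ₁ hφ₁, hcyl φ₂ hφ₂,
    (hindep.indepFun_restrict_transformedField hH (hg φ₁ hφ₁) (hg φ₂ hφ₂) hF
      ).measure_inter_preimage_eq_mul C C hC hC,
    happrox φ₁ hφ₁, happrox φ₂ hφ₂⟩

/-- Let `V` be countably infinite, `Φ ⊆ Sym(V)` closed under composition with
all orbits infinite. Let `(H x)_{x ∈ V}` be independent `S`-valued random variables, and for
each `φ ∈ Φ` let `g φ : S → S` be measurable with `H_φ x := g φ (H (φ x))`. If the families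
`(H_φ x)_{x ∈ V}` have the same joint distribution for all `φ ∈ Φ`, then every event `A` that
agrees, up to a null set, with `{(H_φ x)_{x ∈ V} ∈ B}` for a single measurable `B` and every
`φ ∈ Φ`, has probability `0` or `1`. -/
theorem stmt1 {V : Type*} [Countable V] [Infinite V]
    {Ω : Type*} [MeasurableSpace Ω] (P : Measure Ω) [IsProbabilityMeasure P]
    {S : Type*} [MeasurableSpace S]
    (Φ : Set (Equiv.Perm V))
    (hΦne : Φ.Nonempty)
    (hcomp : ∀ φ ∈ Φ, ∀ ψ ∈ Φ, (φ * ψ : Equiv.Perm V) ∈ Φ)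
    (horb : ∀ x : V, {y : V | ∃ φ ∈ Φ, φ x = y}.Infinite)
    (H : V → Ω → S) (hH : ∀ x, Measurable (H x))
    (hindep : ProbabilityTheory.iIndepFun H P)
    (g : Equiv.Perm V → S → S) (hg : ∀ φ ∈ Φ, Measurable (g φ))
    (hdist : ∀ φ₁ ∈ Φ, ∀ φ₂ ∈ Φ,
      Measure.map (fun ω => fun x : V => g φ₁ (H (φ₁ x) ω)) P =
        Measure.map (fun ω => fun x : V => g φ₂ (H (φ₂ x) ω)) P)
    (A : Set Ω) (hA : MeasurableSet A)
    (B : Set (V → S)) (hB : MeasurableSet B)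
    (hinv : ∀ φ ∈ Φ, P (symmDiff A {ω | (fun x : V => g φ (H (φ x) ω)) ∈ B}) = 0) :
    P A = 0 ∨ P A = 1 :=
  stmt1_general P Φ hΦne hcomp horb H hH hindep g hg hdist A hA B hB hinv
end

section
/- Let d ≥ 1, M ∈ ℕ, δ ∈ (0, M], and let K be a stochastic matrix on ℤ^d with K(x,y) = 0 whenever ‖x − y‖₁ ≥ M and ‖Σ_y K(x,y) y‖₁ ≥ ‖x‖₁ + δ for all x. Let (S_j)_{j≥0} be a Markov chain with transition matrix K and S₀ = x. Then for any a > 1 with ℓ_a(δ) < 1 (where ℓ_a is the affine function through (−M, a^M) and (M, a^{−M})), one has E[a^{−‖S_j‖₁}] ≤ (ℓ_a(δ))^j · a^{−‖x‖₁} for all j ≥ 0. -/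
/-!
Since `a > 1`, the function `s ↦ a ^ (-s)` is convex, so on `[-M, M]` it lies below its chord
`ℓ_a`. A step of the chain changes `‖S‖₁` by less than `M`; hence, given `S_j = z`, the mean of
`a ^ (-(‖S_{j+1}‖₁ - ‖z‖₁))` is at most the mean of `ℓ_a` of the increment, which, `ℓ_a` being
affine, is `ℓ_a` of the mean increment. The drift makes that mean increment at least `δ`, and
`ℓ_a` is decreasing, so `E[a^{-‖S_{j+1}‖₁}] ≤ ℓ_a(δ) E[a^{-‖S_j‖₁}]`; iterate.
-/

open MeasureTheory

/-- The `ℓ¹`-norm of a point of `ℤ^d`, as a real number. -/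
noncomputable def l1norm {d : ℕ} (x : Fin d → ℤ) : ℝ := ∑ i, |(x i : ℝ)|

/-- The affine function through `(-M, a^M)` and `(M, a^{-M})`. -/
noncomputable def ella (a : ℝ) (M : ℕ) (s : ℝ) : ℝ :=
  (a ^ M + (a ^ M)⁻¹) / 2 + s * ((a ^ M)⁻¹ - a ^ M) / (2 * M)

/-- The σ-field generated by the first `j + 1` positions of the chain `S`. -/
def chainFiltration {Ω : Type*} [MeasurableSpace Ω] {d : ℕ}
    (S : ℕ → Ω → (Fin d → ℤ)) (j : ℕ) : MeasurableSpace Ω :=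
  ⨆ k ∈ Finset.range (j + 1), MeasurableSpace.comap (S k) inferInstance

open Real Finset

section Ella

variable {a : ℝ} {M : ℕ}

theorem rpow_neg_le_ella (ha : 0 < a) (hM : 0 < M) {s : ℝ} (hs : |s| ≤ M) :
    a ^ (-s) ≤ ella a M s := by
  obtain ⟨hs₁, hs₂⟩ := abs_le.mp hs
  have hM' : (0 : ℝ) < M := by exact_mod_cast hM
  have hexp : ∀ t : ℝ, exp (t * log a) = a ^ t := fun t => by rw [rpow_def_of_pos ha, mul_comm]
  -- `-s log a` is the convex combination of `M log a` and `-M log a` with weights `(M ∓ s) / 2M`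
  have key := convexOn_exp.2 (Set.mem_univ (M * log a)) (Set.mem_univ (-(M * log a)))
    (div_nonneg (by linarith) (by positivity) : 0 ≤ (M - s) / (2 * M))
    (div_nonneg (by linarith) (by positivity) : 0 ≤ (M + s) / (2 * M))
    (by field_simp; ring)
  refine le_of_eq_of_le ?_ (key.trans_eq ?_)
  · rw [← hexp]; congr 1; simp only [smul_eq_mul]; field_simp; ring
  · rw [smul_eq_mul, smul_eq_mul, ← neg_mul, hexp, hexp, rpow_neg ha.le, rpow_natCast, ella]
    field_simp
    ring

theorem ella_antitone (ha : 1 ≤ a) : Antitone (ella a M) := by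
  intro s t hst
  have hslope : (a ^ M)⁻¹ - a ^ M ≤ 0 :=
    sub_nonpos.2 ((inv_le_one_of_one_le₀ (one_le_pow₀ ha)).trans (one_le_pow₀ ha))
  have := div_le_div_of_nonneg_right (mul_le_mul_of_nonpos_right hst hslope)
    (by positivity : (0 : ℝ) ≤ 2 * M)
  simp only [ella]
  linarith

theorem sum_mul_ella {ι : Type*} {F : Finset ι} {w t : ι → ℝ} (hw : ∑ i ∈ F, w i = 1) :
    ∑ i ∈ F, w i * ella a M (t i) = ella a M (∑ i ∈ F, w i * t i) := by
  have haff : ∀ s, ella a M s = ella a M 0 + s * (ella a M 1 - ella a M 0) := fun s => by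
    simp only [ella]; ring
  simp_rw [haff (∑ i ∈ F, _), haff (t _), mul_add, sum_add_distrib, ← sum_mul, hw, one_mul,
    ← mul_assoc, sum_mul]

theorem sum_mul_rpow_neg_le_ella {ι : Type*} {F : Finset ι} {w s : ι → ℝ} {δ : ℝ}
    (ha : 1 < a) (hM : 0 < M) (hw : ∀ i ∈ F, 0 ≤ w i) (hw1 : ∑ i ∈ F, w i = 1)
    (hs : ∀ i ∈ F, w i ≠ 0 → |s i| ≤ M) (hδ : δ ≤ ∑ i ∈ F, w i * s i) :
    ∑ i ∈ F, w i * a ^ (-s i) ≤ ella a M δ :=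
  calc ∑ i ∈ F, w i * a ^ (-s i) ≤ ∑ i ∈ F, w i * ella a M (s i) := by
        refine sum_le_sum fun i hi => ?_
        rcases eq_or_ne (w i) 0 with h | h
        · simp [h]
        · exact mul_le_mul_of_nonneg_left (rpow_neg_le_ella (by linarith) hM (hs i hi h)) (hw i hi)
    _ = ella a M (∑ i ∈ F, w i * s i) := sum_mul_ella hw1
    _ ≤ ella a M δ := ella_antitone ha.le hδ

end Ella

section L1

variable {d : ℕ}

theorem abs_le_l1norm (x : Fin d → ℤ) (i : Fin d) : |(x i : ℝ)| ≤ l1norm x :=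
  single_le_sum (f := fun i => |(x i : ℝ)|) (fun _ _ => abs_nonneg _) (mem_univ i)

theorem abs_l1norm_sub_l1norm_le (y z : Fin d → ℤ) :
    |l1norm y - l1norm z| ≤ l1norm (fun i => z i - y i) :=
  calc |l1norm y - l1norm z| = |∑ i, (|(y i : ℝ)| - |(z i : ℝ)|)| := by
        rw [l1norm, l1norm, sum_sub_distrib]
    _ ≤ ∑ i, |(|(y i : ℝ)| - |(z i : ℝ)|)| := abs_sum_le_sum_abs _ _
    _ ≤ l1norm (fun i => z i - y i) := sum_le_sum fun i _ => by
        push_cast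
        rw [abs_sub_comm (z i : ℝ)]
        exact abs_abs_sub_abs_le_abs_sub _ _

noncomputable def cube (M : ℕ) (z : Fin d → ℤ) : Finset (Fin d → ℤ) :=
  Fintype.piFinset fun i => Icc (z i - M) (z i + M)

theorem le_l1norm_sub_of_notMem_cube {M : ℕ} {z y : Fin d → ℤ} (hy : y ∉ cube M z) :
    (M : ℝ) ≤ l1norm (fun i => z i - y i) := by
  simp only [cube, Fintype.mem_piFinset, mem_Icc, not_forall] at hy
  obtain ⟨i, hi⟩ := hy
  have hM : (M : ℤ) ≤ |z i - y i| := by rw [le_abs]; omega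
  have hM' : (M : ℝ) ≤ |((z i - y i : ℤ) : ℝ)| := by rw [← Int.cast_abs]; exact_mod_cast hM
  exact hM'.trans (abs_le_l1norm (fun i => z i - y i) i)

theorem sum_abs_tsum_mul_le_sum_mul_l1norm {F : Finset (Fin d → ℤ)} {w : (Fin d → ℤ) → ℝ}
    (hw : ∀ y, 0 ≤ w y) (hF : ∀ y ∉ F, w y = 0) :
    ∑ i, |∑' y, w y * (y i : ℝ)| ≤ ∑ y ∈ F, w y * l1norm y :=
  calc ∑ i, |∑' y, w y * (y i : ℝ)| = ∑ i, |∑ y ∈ F, w y * (y i : ℝ)| := by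
        refine sum_congr rfl fun i _ => ?_
        rw [tsum_eq_sum fun y hy => by rw [hF y hy, zero_mul]]
    _ ≤ ∑ i, ∑ y ∈ F, w y * |(y i : ℝ)| := sum_le_sum fun i _ =>
        (abs_sum_le_sum_abs _ _).trans_eq (sum_congr rfl fun y _ => by
          rw [abs_mul, abs_of_nonneg (hw y)])
    _ = ∑ y ∈ F, w y * l1norm y := by simp_rw [sum_comm (s := univ), l1norm, mul_sum]

end L1

section Kernel

variable {d M : ℕ} {δ a : ℝ} {K : (Fin d → ℤ) → (Fin d → ℤ) → ℝ}

theorem sum_cube_mul_rpow_neg_l1norm_le (hM : 0 < M) (ha : 1 < a)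
    (hKnn : ∀ x y, 0 ≤ K x y)
    (hKstoch : ∀ x, HasSum (fun y => K x y) 1)
    (hKrange : ∀ x y, (M : ℝ) ≤ l1norm (fun i => x i - y i) → K x y = 0)
    (hdrift : ∀ x : Fin d → ℤ,
      l1norm x + δ ≤ ∑ i : Fin d, |∑' y : Fin d → ℤ, K x y * (y i : ℝ)|)
    (z : Fin d → ℤ) :
    ∑ y ∈ cube M z, K z y * a ^ (-l1norm y) ≤ ella a M δ * a ^ (-l1norm z) := by
  have hoff : ∀ y ∉ cube M z, K z y = 0 := fun y hy =>
    hKrange z y (le_l1norm_sub_of_notMem_cube hy)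
  have hsum : ∑ y ∈ cube M z, K z y = 1 := by
    rw [← (hKstoch z).tsum_eq, tsum_eq_sum hoff]
  have hmean : δ ≤ ∑ y ∈ cube M z, K z y * (l1norm y - l1norm z) := by
    have := (hdrift z).trans (sum_abs_tsum_mul_le_sum_mul_l1norm (hKnn z) hoff)
    simp_rw [mul_sub, sum_sub_distrib, ← sum_mul, hsum, one_mul]
    linarith
  have hjump : ∀ y ∈ cube M z, K z y ≠ 0 → |l1norm y - l1norm z| ≤ M := fun y _ hK =>
    (abs_l1norm_sub_l1norm_le y z).trans (not_le.1 (mt (hKrange z y) hK)).le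
  calc ∑ y ∈ cube M z, K z y * a ^ (-l1norm y)
      = (∑ y ∈ cube M z, K z y * a ^ (-(l1norm y - l1norm z))) * a ^ (-l1norm z) := by
        rw [sum_mul]
        refine sum_congr rfl fun y _ => ?_
        rw [mul_assoc, ← rpow_add (by linarith)]
        ring_nf
    _ ≤ ella a M δ * a ^ (-l1norm z) := by
        gcongr
        exact sum_mul_rpow_neg_le_ella ha hM (fun y _ => hKnn z y) hsum hjump hmean

theorem tsum_ofReal_mul_rpow_neg_l1norm_le (hM : 0 < M) (ha : 1 < a) (hℓ : 0 ≤ ella a M δ)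
    (hKnn : ∀ x y, 0 ≤ K x y)
    (hKstoch : ∀ x, HasSum (fun y => K x y) 1)
    (hKrange : ∀ x y, (M : ℝ) ≤ l1norm (fun i => x i - y i) → K x y = 0)
    (hdrift : ∀ x : Fin d → ℤ,
      l1norm x + δ ≤ ∑ i : Fin d, |∑' y : Fin d → ℤ, K x y * (y i : ℝ)|)
    (z : Fin d → ℤ) :
    ∑' y, ENNReal.ofReal (K z y) * ENNReal.ofReal (a ^ (-l1norm y)) ≤
      ENNReal.ofReal (ella a M δ) * ENNReal.ofReal (a ^ (-l1norm z)) := by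
  rw [tsum_eq_sum (s := cube M z) fun y hy => by
      rw [hKrange z y (le_l1norm_sub_of_notMem_cube hy), ENNReal.ofReal_zero, zero_mul],
    ← ENNReal.ofReal_mul hℓ]
  simp_rw [← ENNReal.ofReal_mul (hKnn z _)]
  rw [← ENNReal.ofReal_sum_of_nonneg fun y _ => mul_nonneg (hKnn z y) (by positivity)]
  exact ENNReal.ofReal_le_ofReal
    (sum_cube_mul_rpow_neg_l1norm_le hM ha hKnn hKstoch hKrange hdrift z)

end Kernel

/-- In `ℝ≥0∞` the exchange of the sum over states with the integral needs no integrability. -/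
theorem lintegral_comp_eq_lintegral_tsum_of_condExp {Ω α : Type*} {m mΩ : MeasurableSpace Ω}
    {P : Measure[mΩ] Ω} [IsFiniteMeasure P] [MeasurableSpace α] [MeasurableSingletonClass α]
    [Countable α] (hm : m ≤ mΩ) {X Y : Ω → α} (hX : Measurable X) (hY : Measurable Y)
    {K : α → α → ℝ}
    (hcond : ∀ y, P[{ω | X ω = y}.indicator (fun _ => (1 : ℝ)) | m] =ᵐ[P] fun ω => K (Y ω) y)
    (f : α → ENNReal) :
    ∫⁻ ω, f (X ω) ∂P = ∫⁻ ω, ∑' y, ENNReal.ofReal (K (Y ω) y) * f y ∂P := by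
  have hKm : ∀ y, Measurable fun ω => ENNReal.ofReal (K (Y ω) y) := fun y =>
    (measurable_of_countable fun z => ENNReal.ofReal (K z y)).comp hY
  have hprob : ∀ y, P {ω | X ω = y} = ∫⁻ ω, ENNReal.ofReal (K (Y ω) y) ∂P := by
    intro y
    have hXy : MeasurableSet {ω | X ω = y} := hX (measurableSet_singleton y)
    have hint : Integrable (fun ω => K (Y ω) y) P := integrable_condExp.congr (hcond y)
    have hnn : 0 ≤ᵐ[P] fun ω => K (Y ω) y :=
      (condExp_nonneg (ae_of_all _ (Set.indicator_nonneg fun _ _ => zero_le_one))).trans_eq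
        (hcond y)
    rw [← ofReal_integral_eq_lintegral_ofReal hint hnn, ← integral_congr_ae (hcond y),
      integral_condExp hm, integral_indicator_const _ hXy,
      smul_eq_mul, mul_one, measureReal_def, ENNReal.ofReal_toReal (measure_ne_top _ _)]
  calc ∫⁻ ω, f (X ω) ∂P = ∫⁻ y, f y ∂(P.map X) :=
        (lintegral_map (measurable_of_countable f) hX).symm
    _ = ∑' y, ∫⁻ ω, ENNReal.ofReal (K (Y ω) y) * f y ∂P := by
        rw [lintegral_countable']
        refine tsum_congr fun y => ?_
        rw [Measure.map_apply hX (measurableSet_singleton y), lintegral_mul_const _ (hKm y),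
          mul_comm, ← hprob]
        rfl
    _ = ∫⁻ ω, ∑' y, ENNReal.ofReal (K (Y ω) y) * f y ∂P :=
        (lintegral_tsum fun y => ((hKm y).mul_const _).aemeasurable).symm

theorem stmt5_general {Ω : Type*} [MeasurableSpace Ω] (P : Measure Ω) [IsProbabilityMeasure P]
    (d M : ℕ) (δ : ℝ) (hδ0 : 0 < δ) (hδM : δ ≤ M)
    (K : (Fin d → ℤ) → (Fin d → ℤ) → ℝ)
    (hKnn : ∀ x y, 0 ≤ K x y)
    (hKstoch : ∀ x, HasSum (fun y => K x y) 1)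
    (hKrange : ∀ x y, (M : ℝ) ≤ l1norm (fun i => x i - y i) → K x y = 0)
    (hdrift : ∀ x : Fin d → ℤ,
      l1norm x + δ ≤ ∑ i : Fin d, |∑' y : Fin d → ℤ, K x y * (y i : ℝ)|)
    (S : ℕ → Ω → (Fin d → ℤ)) (hS : ∀ j, Measurable (S j))
    (x : Fin d → ℤ) (hS0 : ∀ ω, S 0 ω = x)
    (hMarkov : ∀ (j : ℕ) (y : Fin d → ℤ),
      (P[Set.indicator {ω | S (j + 1) ω = y} (fun _ => (1 : ℝ)) | chainFiltration S j])
        =ᵐ[P] fun ω => K (S j ω) y)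
    (a : ℝ) (ha : 1 < a) (j : ℕ) :
    ∫ ω, a ^ (-(l1norm (S j ω))) ∂P ≤ (ella a M δ) ^ j * a ^ (-(l1norm x)) := by
  have ha0 : 0 < a := by linarith
  have hM : 0 < M := by exact_mod_cast hδ0.trans_le hδM
  have hℓ : 0 ≤ ella a M δ := (rpow_nonneg ha0.le _).trans
    (rpow_neg_le_ella ha0 hM (by rwa [abs_of_pos hδ0]))
  have hstep := tsum_ofReal_mul_rpow_neg_l1norm_le hM ha hℓ hKnn hKstoch hKrange hdrift
  have hle : ∀ n, ∫⁻ ω, ENNReal.ofReal (a ^ (-l1norm (S n ω))) ∂P ≤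
      ENNReal.ofReal (ella a M δ ^ n * a ^ (-l1norm x)) := by
    intro n
    induction n with
    | zero => simp [hS0]
    | succ n ih =>
      calc ∫⁻ ω, ENNReal.ofReal (a ^ (-l1norm (S (n + 1) ω))) ∂P
          = ∫⁻ ω, ∑' y, ENNReal.ofReal (K (S n ω) y) * ENNReal.ofReal (a ^ (-l1norm y)) ∂P :=
            lintegral_comp_eq_lintegral_tsum_of_condExp (iSup₂_le fun k _ => (hS k).comap_le)
              (hS _) (hS _) (hMarkov n) (fun y => ENNReal.ofReal (a ^ (-l1norm y)))
        _ ≤ ∫⁻ ω, ENNReal.ofReal (ella a M δ) * ENNReal.ofReal (a ^ (-l1norm (S n ω))) ∂P :=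
            lintegral_mono fun ω => hstep (S n ω)
        _ ≤ ENNReal.ofReal (ella a M δ) * ENNReal.ofReal (ella a M δ ^ n * a ^ (-l1norm x)) := by
            rw [lintegral_const_mul' _ _ ENNReal.ofReal_ne_top]
            gcongr
        _ = ENNReal.ofReal (ella a M δ ^ (n + 1) * a ^ (-l1norm x)) := by
            rw [← ENNReal.ofReal_mul hℓ, pow_succ', mul_assoc]
  rw [integral_eq_lintegral_of_nonneg_ae (ae_of_all _ fun ω => rpow_nonneg ha0.le _)
    ((measurable_of_countable fun z : Fin d → ℤ => a ^ (-l1norm z)).comp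
      (hS j)).aestronglyMeasurable]
  exact ENNReal.toReal_le_of_le_ofReal (by positivity) (hle j)

/-- Let `K` be a stochastic matrix on `ℤ^d` with jumps of `ℓ¹`-size `< M` and
drift `‖∑_y K(x,y) y‖₁ ≥ ‖x‖₁ + δ` with `δ ∈ (0, M]`. If `(S_j)` is a Markov chain with
transition matrix `K` started at `x`, then for any `a > 1` with `ℓ_a(δ) < 1` one has
`E[a^{-‖S_j‖₁}] ≤ ℓ_a(δ)^j a^{-‖x‖₁}` for all `j`. -/
theorem stmt5 {Ω : Type*} [MeasurableSpace Ω] (P : Measure Ω) [IsProbabilityMeasure P]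
    (d M : ℕ) (hd : 1 ≤ d) (δ : ℝ) (hδ0 : 0 < δ) (hδM : δ ≤ M)
    (K : (Fin d → ℤ) → (Fin d → ℤ) → ℝ)
    (hKnn : ∀ x y, 0 ≤ K x y)
    (hKstoch : ∀ x, HasSum (fun y => K x y) 1)
    (hKrange : ∀ x y, (M : ℝ) ≤ l1norm (fun i => x i - y i) → K x y = 0)
    (hdrift : ∀ x : Fin d → ℤ,
      l1norm x + δ ≤ ∑ i : Fin d, |∑' y : Fin d → ℤ, K x y * (y i : ℝ)|)
    (S : ℕ → Ω → (Fin d → ℤ)) (hS : ∀ j, Measurable (S j))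
    (x : Fin d → ℤ) (hS0 : ∀ ω, S 0 ω = x)
    (hMarkov : ∀ (j : ℕ) (y : Fin d → ℤ),
      (P[Set.indicator {ω | S (j + 1) ω = y} (fun _ => (1 : ℝ)) | chainFiltration S j])
        =ᵐ[P] fun ω => K (S j ω) y)
    (a : ℝ) (ha : 1 < a) (hla : ella a M δ < 1) (j : ℕ) :
    ∫ ω, a ^ (-(l1norm (S j ω))) ∂P ≤ (ella a M δ) ^ j * a ^ (-(l1norm x)) :=
  stmt5_general P d M δ hδ0 hδM K hKnn hKstoch hKrange hdrift S hS x hS0 hMarkov a ha j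
end

section
/- Let (X,𝒳) be a measurable space, S a Polish space with Borel σ-field 𝒮, and let X⁰ : Ω⁰ → X, Y⁰ : Ω⁰ → S be random variables on a probability space (Ω⁰,ℱ⁰,P⁰). Then there exists a probability space (Ω,ℱ,P) carrying random variables X, Y, Z such that (X,Y) has the same distribution as (X⁰,Y⁰) and, conditionally on X, the variables Y and Z are independent and identically distributed. -/
/-!
Let `κ` be the conditional distribution of `Y⁰` given `X⁰`, which exists because `S` is standard
Borel. On `𝕏 × S × S` take the law `P⁰ ∘ X⁰⁻¹ ⊗ (κ × κ)`, i.e. draw `X` from the law of `X⁰` and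
then `Y`, `Z` independently from `κ X`, and let `X, Y, Z` be the coordinates. Forgetting `Z`
gives `P⁰ ∘ X⁰⁻¹ ⊗ κ`, the disintegration of the law of `(X⁰, Y⁰)`.
-/

open MeasureTheory ProbabilityTheory

lemma MeasureTheory.Measure.map_prodMap_id_fst_compProd_prod {α β γ : Type*}
    [MeasurableSpace α] [MeasurableSpace β] [MeasurableSpace γ]
    (μ : Measure α) [SFinite μ] (κ : Kernel α β) [IsSFiniteKernel κ]
    (η : Kernel α γ) [IsMarkovKernel η] :
    (μ ⊗ₘ (κ ×ₖ η)).map (Prod.map id Prod.fst) = μ ⊗ₘ κ := by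
  rw [← Measure.compProd_map measurable_fst, ← Kernel.fst_eq, Kernel.fst_prod]

/-- Given random variables `X⁰ : Ω⁰ → 𝕏` and `Y⁰ : Ω⁰ → S` (with `S` Polish)
on a probability space, there exists a probability space carrying random variables `X, Y, Z`
such that `(X,Y) ~ (X⁰,Y⁰)` and, conditionally on `X`, the variables `Y` and `Z` are i.i.d.
(the conditional law of `(Y,Z)` given `X` is the product of two copies of one Markov kernel). -/
theorem stmt10 {Ω₀ : Type} [MeasurableSpace Ω₀] (P₀ : Measure Ω₀) [IsProbabilityMeasure P₀]
    {𝕏 : Type} [MeasurableSpace 𝕏]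
    {S : Type} [MeasurableSpace S] [TopologicalSpace S] [PolishSpace S] [BorelSpace S]
    (X₀ : Ω₀ → 𝕏) (hX₀ : Measurable X₀) (Y₀ : Ω₀ → S) (hY₀ : Measurable Y₀) :
    ∃ (Ω : Type) (_ : MeasurableSpace Ω) (P : Measure Ω) (_ : IsProbabilityMeasure P)
      (X : Ω → 𝕏) (Y Z : Ω → S),
      Measurable X ∧ Measurable Y ∧ Measurable Z ∧
      Measure.map (fun ω => (X ω, Y ω)) P = Measure.map (fun ω => (X₀ ω, Y₀ ω)) P₀ ∧
      ∃ (κ : ProbabilityTheory.Kernel 𝕏 S) (_ : IsMarkovKernel κ),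
        Measure.map (fun ω => (X ω, (Y ω, Z ω))) P =
          Measure.compProd (Measure.map X₀ P₀) (κ ×ₖ κ) := by
  have : Nonempty S := (nonempty_of_isProbabilityMeasure P₀).map Y₀
  have := Measure.isProbabilityMeasure_map (μ := P₀) hX₀.aemeasurable
  let κ := condDistrib Y₀ X₀ P₀
  refine ⟨𝕏 × S × S, inferInstance, P₀.map X₀ ⊗ₘ (κ ×ₖ κ), inferInstance, Prod.fst,
    fun p => p.2.1, fun p => p.2.2, measurable_fst, measurable_snd.fst, measurable_snd.snd,
    ?_, κ, inferInstance, Measure.map_id'⟩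
  rw [← compProd_map_condDistrib hY₀.aemeasurable]
  exact Measure.map_prodMap_id_fst_compProd_prod _ _ _
end

section
/- Let d ≥ 2 and let (c({x,y}))_{x,y} be nonnegative conductances on nearest-neighbor edges of ℤ^d, stationary under shifts, with E[q(0)] < ∞ where q(x) = Σ_{‖y−x‖₁=1} c({x,y}). Let 𝒞(x) denote the cluster of x in the graph of strictly positive conductances, κ the associated random walk transition matrix, and K the induced 'environment viewed from the particle' kernel (Kf)(π) = Σ_z π(0,z) f(shift_z π). Assume P[#𝒞(0) = ∞] > 0 and define the measure Q[B] := E[q(0); {κ ∈ B} ∩ {#𝒞(0) = ∞}] / E[q(0); #𝒞(0) = ∞] on environments. Then Q is invariant for K, i.e. ∫ (Kf) dQ = ∫ f dQ for all bounded measurable f. -/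
open MeasureTheory

noncomputable section

variable (d : ℕ)

/-- Conductance/environment fields on `ℤ^d`: functions of ordered pairs of sites. -/
abbrev EnvSpace (d : ℕ) := (Fin d → ℤ) → (Fin d → ℤ) → ℝ

/-- `ℓ¹`-distance on `ℤ^d`. -/
def l1dist {d : ℕ} (x y : Fin d → ℤ) : ℤ := ∑ i, |x i - y i|

/-- `q(x) = ∑_{‖y-x‖₁ = 1} c(x,y)`, the total conductance at `x`. -/
def qfun {d : ℕ} (c : EnvSpace d) (x : Fin d → ℤ) : ℝ :=
  ∑' y : Fin d → ℤ, if l1dist x y = 1 then c x y else 0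

/-- The random-walk transition matrix `κ` associated to the conductances `c`. -/
def kappaE {d : ℕ} (c : EnvSpace d) : EnvSpace d := fun x y =>
  if qfun c x ≠ 0 ∧ l1dist x y = 1 then c x y / qfun c x
  else if qfun c x = 0 ∧ x = y then 1 else 0

/-- One step along an edge of strictly positive conductance. -/
def posStep {d : ℕ} (c : EnvSpace d) (x y : Fin d → ℤ) : Prop :=
  l1dist x y = 1 ∧ 0 < c x y

/-- The cluster of `x`: all sites connected to `x` by a path of positive conductances. -/
def cluster {d : ℕ} (c : EnvSpace d) (x : Fin d → ℤ) : Set (Fin d → ℤ) :=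
  {y | Relation.ReflTransGen (posStep c) x y}

/-- The shift of an environment by `z`. -/
def shiftE {d : ℕ} (z : Fin d → ℤ) (π : EnvSpace d) : EnvSpace d :=
  fun x y => π (x + z) (y + z)

/-- The `environment viewed from the particle` transition operator:
`(Kf)(π) = ∑_z π(0,z) f(shift_z π)`. -/
def Kop {d : ℕ} (f : EnvSpace d → ℝ) (π : EnvSpace d) : ℝ :=
  ∑' z : Fin d → ℤ, π 0 z * f (shiftE z π)

/-!
Let `μ` be `q(0) • P` restricted to the event `{#𝒞(0) = ∞}`, so that `Q` is the normalised image of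
`μ` under `κ`. On that event `q(0) > 0` and `q(0) κ(0,z) = c(0,z)`, hence
`∫ K f d(κ_* μ) = ∑_z E[c(0,z) f(κ(shift_z c)); #𝒞(0) = ∞]`. When `c(0,z) > 0` the clusters of `0`
and `z` coincide, so the event is `{#𝒞(0) = ∞}` for `shift_z c` as well, and
`c(0,z) = (shift_z c)(-z,0)`. Stationarity replaces `shift_z c` by `c`, which turns the `z`-th
term into `E[c(-z,0) f(κ(c)); #𝒞(0) = ∞]`; by symmetry `∑_z c(-z,0) = q(0)`, so the sum is
`E[q(0) f(κ); #𝒞(0) = ∞] = ∫ f d(κ_* μ)`.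
-/

section

variable {d}

lemma l1dist_comm (x y : Fin d → ℤ) : l1dist x y = l1dist y x :=
  Finset.sum_congr rfl fun _ _ => abs_sub_comm _ _

lemma l1dist_add_right (x y z : Fin d → ℤ) : l1dist (x + z) (y + z) = l1dist x y := by
  simp [l1dist]

lemma l1dist_zero_neg (z : Fin d → ℤ) : l1dist 0 (-z) = l1dist 0 z := by
  simp [l1dist]

lemma abs_le_one_of_l1dist_zero_eq_one {z : Fin d → ℤ} (h : l1dist 0 z = 1) (i : Fin d) :
    |z i| ≤ 1 := by
  have := Finset.single_le_sum (f := fun j => |(0 : Fin d → ℤ) j - z j|)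
    (fun j _ => abs_nonneg _) (Finset.mem_univ i)
  simp_all [l1dist]

def nbr (d : ℕ) : Finset (Fin d → ℤ) :=
  {z ∈ Fintype.piFinset fun _ => Finset.Icc (-1) 1 | l1dist 0 z = 1}

lemma mem_nbr {z : Fin d → ℤ} : z ∈ nbr d ↔ l1dist 0 z = 1 := by
  refine ⟨fun h => (Finset.mem_filter.1 h).2, fun h => Finset.mem_filter.2 ⟨?_, h⟩⟩
  exact Fintype.mem_piFinset.2 fun i =>
    Finset.mem_Icc.2 (abs_le.1 (abs_le_one_of_l1dist_zero_eq_one h i))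

lemma neg_mem_nbr {z : Fin d → ℤ} : -z ∈ nbr d ↔ z ∈ nbr d := by
  rw [mem_nbr, mem_nbr, l1dist_zero_neg]

lemma qfun_zero_eq_sum (c : EnvSpace d) : qfun c 0 = ∑ z ∈ nbr d, c 0 z := by
  rw [qfun, tsum_eq_sum (s := nbr d) fun z hz => if_neg (mt mem_nbr.2 hz)]
  exact Finset.sum_congr rfl fun z hz => if_pos (mem_nbr.1 hz)

lemma qfun_shiftE (c : EnvSpace d) (x z : Fin d → ℤ) :
    qfun (shiftE z c) x = qfun c (x + z) := by
  rw [qfun, qfun]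
  conv_rhs => rw [← (Equiv.addRight z).tsum_eq]
  simp [shiftE, l1dist_add_right]

lemma kappaE_shiftE (c : EnvSpace d) (z : Fin d → ℤ) :
    kappaE (shiftE z c) = shiftE z (kappaE c) := by
  ext x y
  simp [kappaE, shiftE, qfun_shiftE, l1dist_add_right]

lemma kappaE_zero_apply {c : EnvSpace d} (hq : qfun c 0 ≠ 0) (z : Fin d → ℤ) :
    kappaE c 0 z = if z ∈ nbr d then c 0 z / qfun c 0 else 0 := by
  simp [kappaE, hq, mem_nbr]

lemma Kop_eq_sum_nbr (f : EnvSpace d → ℝ) {π : EnvSpace d} (hπ : ∀ z ∉ nbr d, π 0 z = 0) :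
    Kop f π = ∑ z ∈ nbr d, π 0 z * f (shiftE z π) :=
  tsum_eq_sum fun z hz => by rw [hπ z hz, zero_mul]

lemma qfun_mul_Kop_kappaE (f : EnvSpace d → ℝ) {c : EnvSpace d} (hq : qfun c 0 ≠ 0) :
    qfun c 0 * Kop f (kappaE c) = ∑ z ∈ nbr d, c 0 z * f (kappaE (shiftE z c)) := by
  rw [Kop_eq_sum_nbr f fun z hz => by simp [kappaE_zero_apply hq, hz], Finset.mul_sum]
  refine Finset.sum_congr rfl fun z hz => ?_
  rw [kappaE_zero_apply hq, if_pos hz, kappaE_shiftE]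
  field_simp

lemma posStep_shiftE {c : EnvSpace d} {x y z : Fin d → ℤ} :
    posStep (shiftE z c) x y ↔ posStep c (x + z) (y + z) := by
  simp [posStep, shiftE, l1dist_add_right]

lemma cluster_shiftE (c : EnvSpace d) (x z : Fin d → ℤ) :
    cluster (shiftE z c) x = (· + z) ⁻¹' cluster c (x + z) := by
  ext y
  constructor
  · exact fun h => Relation.ReflTransGen.lift (p := posStep c) (· + z)
      (fun _ _ => posStep_shiftE.1) _ _ h
  · intro h
    have := Relation.ReflTransGen.lift (p := posStep (shiftE z c)) (· - z)
      (fun a b hab => posStep_shiftE.2 (by simpa using hab)) _ _ h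
    simpa [cluster, Function.onFun] using this

lemma infinite_cluster_shiftE_iff (c : EnvSpace d) (z : Fin d → ℤ) :
    (cluster (shiftE z c) 0).Infinite ↔ (cluster c z).Infinite := by
  rw [cluster_shiftE, zero_add]
  refine ⟨fun h hfin => h (hfin.preimage (add_left_injective z).injOn), fun h => h.preimage ?_⟩
  exact (Equiv.addRight z).surjective.range_eq ▸ Set.subset_univ _

lemma cluster_eq_of_posStep {c : EnvSpace d} (hc : ∀ x y, c x y = c y x)
    {x y : Fin d → ℤ} (h : posStep c x y) : cluster c x = cluster c y := by
  have h' : posStep c y x := ⟨l1dist_comm x y ▸ h.1, hc x y ▸ h.2⟩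
  ext w
  exact ⟨fun hw => hw.head h', fun hw => hw.head h⟩

lemma qfun_zero_nonneg {c : EnvSpace d} (hc : ∀ z, 0 ≤ c 0 z) : 0 ≤ qfun c 0 :=
  qfun_zero_eq_sum c ▸ Finset.sum_nonneg fun z _ => hc z

lemma apply_zero_le_qfun_zero {c : EnvSpace d} (hc : ∀ z, 0 ≤ c 0 z) {z : Fin d → ℤ}
    (hz : z ∈ nbr d) : c 0 z ≤ qfun c 0 :=
  qfun_zero_eq_sum c ▸ Finset.single_le_sum (fun w _ => hc w) hz

lemma qfun_zero_pos_of_infinite {c : EnvSpace d} (hc : ∀ z, 0 ≤ c 0 z)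
    (h : (cluster c 0).Infinite) : 0 < qfun c 0 := by
  obtain ⟨y, hy, hy0⟩ := (h.sdiff (Set.finite_singleton 0)).nonempty
  rcases hy.cases_head with rfl | ⟨b, hb, -⟩
  · exact absurd rfl hy0
  · exact hb.2.trans_le (apply_zero_le_qfun_zero hc (mem_nbr.2 hb.1))

def infiniteCluster (d : ℕ) : Set (EnvSpace d) := {c | (cluster c 0).Infinite}

lemma indicator_infiniteCluster_shiftE {c : EnvSpace d} (hnn : ∀ x y, 0 ≤ c x y)
    (hc : ∀ x y, c x y = c y x) {z : Fin d → ℤ} (hz : z ∈ nbr d) (g : EnvSpace d → ℝ) :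
    (infiniteCluster d).indicator (fun c => c 0 z * g (shiftE z c)) c =
      (infiniteCluster d).indicator (fun c => c 0 (-z) * g c) (shiftE z c) := by
  have hval : shiftE z c 0 (-z) = c 0 z := by simp [shiftE, hc z 0]
  rcases (hnn 0 z).eq_or_lt with h0 | hpos
  · rw [Set.indicator_apply_eq_zero.2 fun _ => by rw [← h0, zero_mul],
      Set.indicator_apply_eq_zero.2 fun _ => by rw [hval, ← h0, zero_mul]]
  · have hmem : c ∈ infiniteCluster d ↔ shiftE z c ∈ infiniteCluster d := by
      simp only [infiniteCluster, Set.mem_ofPred_eq, infinite_cluster_shiftE_iff,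
        cluster_eq_of_posStep hc ⟨mem_nbr.1 hz, hpos⟩]
    by_cases hS : c ∈ infiniteCluster d
    · rw [Set.indicator_of_mem hS, Set.indicator_of_mem (hmem.1 hS), hval]
    · rw [Set.indicator_of_notMem hS, Set.indicator_of_notMem (mt hmem.2 hS)]

lemma sum_nbr_indicator_apply_neg_mul (S : Set (EnvSpace d)) (g : EnvSpace d → ℝ)
    (c : EnvSpace d) :
    ∑ z ∈ nbr d, S.indicator (fun c => c 0 (-z) * g c) c =
      S.indicator (fun c => qfun c 0 * g c) c := by
  by_cases hc : c ∈ S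
  · simp only [Set.indicator_of_mem hc, ← Finset.sum_mul, qfun_zero_eq_sum]
    congr 1
    exact Finset.sum_equiv (Equiv.neg _) (fun _ => neg_mem_nbr.symm) fun _ _ => rfl
  · simp [hc]

lemma measurable_apply_apply (x y : Fin d → ℤ) : Measurable fun π : EnvSpace d => π x y := by
  fun_prop

lemma measurable_shiftE (z : Fin d → ℤ) : Measurable (shiftE (d := d) z) := by
  unfold shiftE; fun_prop

lemma measurable_qfun_zero : Measurable fun c : EnvSpace d => qfun c 0 := by
  simp only [qfun_zero_eq_sum]; fun_prop

lemma measurableSet_apply_zero_eq_zero_of_notMem_nbr :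
    MeasurableSet {π : EnvSpace d | ∀ z ∉ nbr d, π 0 z = 0} := by
  simp only [Set.ofPred_forall]
  exact MeasurableSet.iInter fun z => MeasurableSet.iInter fun _ =>
    measurableSet_eq_fun (measurable_apply_apply 0 z) measurable_const

lemma Kop_ae_eq_sum_nbr {μ : Measure (EnvSpace d)} (hκ : Measurable (kappaE (d := d)))
    (hμ : ∀ᵐ c ∂μ, qfun c 0 ≠ 0) (f : EnvSpace d → ℝ) :
    Kop f =ᵐ[μ.map kappaE] fun π => ∑ z ∈ nbr d, π 0 z * f (shiftE z π) := by
  have hsupp : ∀ᵐ π ∂μ.map kappaE, ∀ z ∉ nbr d, π 0 z = 0 := by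
    rw [ae_map_iff hκ.aemeasurable measurableSet_apply_zero_eq_zero_of_notMem_nbr]
    filter_upwards [hμ] with c hc z hz
    rw [kappaE_zero_apply hc, if_neg hz]
  filter_upwards [hsupp] with π hπ using Kop_eq_sum_nbr f hπ

lemma ae_withDensity_ofReal_ne_zero {α : Type*} [MeasurableSpace α] {P : Measure α} {q : α → ℝ}
    (hq : Measurable q) : ∀ᵐ x ∂P.withDensity fun x => ENNReal.ofReal (q x), q x ≠ 0 :=
  (ae_withDensity_iff hq.ennreal_ofReal).2 (ae_of_all _ fun x hx h0 => hx (by simp [h0]))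

lemma integral_restrict_withDensity_ofReal {α : Type*} [MeasurableSpace α] {P : Measure α}
    {q : α → ℝ} (hq : Measurable q) (hq0 : 0 ≤ᵐ[P] q) {S : Set α} (hS : MeasurableSet S)
    (g : α → ℝ) :
    ∫ x, g x ∂(P.withDensity fun x => ENNReal.ofReal (q x)).restrict S =
      ∫ x, S.indicator (fun x => q x * g x) x ∂P := by
  rw [restrict_withDensity hS, integral_withDensity_eq_integral_toReal_smul hq.ennreal_ofReal
    (ae_of_all _ fun _ => ENNReal.ofReal_lt_top), integral_indicator hS]
  refine integral_congr_ae ?_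
  filter_upwards [ae_restrict_of_ae hq0] with x hx
  rw [ENNReal.toReal_ofReal hx, smul_eq_mul]

lemma integral_comp_shiftE {P : Measure (EnvSpace d)} {z : Fin d → ℤ}
    (hstat : P.map (shiftE z) = P) {g : EnvSpace d → ℝ} (hg : Measurable g) :
    ∫ c, g (shiftE z c) ∂P = ∫ c, g c ∂P := by
  conv_rhs => rw [← hstat]
  exact (integral_map (measurable_shiftE z).aemeasurable hg.aestronglyMeasurable).symm

lemma integrable_indicator_apply_zero_mul {P : Measure (EnvSpace d)}
    (hq : Integrable (fun c => qfun c 0) P) (hnn : ∀ᵐ c ∂P, ∀ x y, 0 ≤ c x y)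
    {S : Set (EnvSpace d)} (hS : MeasurableSet S) {z : Fin d → ℤ} (hz : z ∈ nbr d)
    {h : EnvSpace d → ℝ} (hh : Measurable h) {C : ℝ} (hC : ∀ c, |h c| ≤ C) :
    Integrable (S.indicator fun c => c 0 z * h c) P := by
  have hcz : Integrable (fun c : EnvSpace d => c 0 z) P := by
    refine hq.mono' (measurable_apply_apply 0 z).aestronglyMeasurable ?_
    filter_upwards [hnn] with c hc
    rw [Real.norm_eq_abs, abs_of_nonneg (hc 0 z)]
    exact apply_zero_le_qfun_zero (hc 0) hz
  exact (hcz.mul_bdd hh.aestronglyMeasurable (ae_of_all _ hC)).indicator hS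

lemma integral_indicator_infiniteCluster_shiftE {P : Measure (EnvSpace d)}
    (hnn : ∀ᵐ c ∂P, ∀ x y, 0 ≤ c x y) (hsymm : ∀ᵐ c ∂P, ∀ x y, c x y = c y x)
    {z : Fin d → ℤ} (hstat : P.map (shiftE z) = P) (hS : MeasurableSet (infiniteCluster d))
    (hz : z ∈ nbr d) {g : EnvSpace d → ℝ} (hg : Measurable g) :
    ∫ c, (infiniteCluster d).indicator (fun c => c 0 z * g (shiftE z c)) c ∂P =
      ∫ c, (infiniteCluster d).indicator (fun c => c 0 (-z) * g c) c ∂P := by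
  rw [← integral_comp_shiftE hstat (g := (infiniteCluster d).indicator fun c => c 0 (-z) * g c)
    (((measurable_apply_apply 0 (-z)).mul hg).indicator hS)]
  refine integral_congr_ae ?_
  filter_upwards [hnn, hsymm] with c hc hc' using indicator_infiniteCluster_shiftE hc hc' hz g

lemma integral_indicator_qfun_mul_Kop_kappaE {P : Measure (EnvSpace d)}
    (hnn : ∀ᵐ c ∂P, ∀ x y, 0 ≤ c x y) (hsymm : ∀ᵐ c ∂P, ∀ x y, c x y = c y x)
    (hstat : ∀ z : Fin d → ℤ, P.map (shiftE z) = P) (hq : Integrable (fun c => qfun c 0) P)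
    (hκ : Measurable (kappaE (d := d))) (hS : MeasurableSet (infiniteCluster d))
    {f : EnvSpace d → ℝ} (hf : Measurable f) {C : ℝ} (hC : ∀ π, |f π| ≤ C) :
    ∫ c, (infiniteCluster d).indicator (fun c => qfun c 0 * Kop f (kappaE c)) c ∂P =
      ∫ c, (infiniteCluster d).indicator (fun c => qfun c 0 * f (kappaE c)) c ∂P := by
  have hg : Measurable fun c => f (kappaE c) := hf.comp hκ
  calc _ = ∫ c, ∑ z ∈ nbr d,
        (infiniteCluster d).indicator (fun c => c 0 z * f (kappaE (shiftE z c))) c ∂P := by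
        refine integral_congr_ae ?_
        filter_upwards [hnn] with c hc
        by_cases hcS : c ∈ infiniteCluster d
        · simp only [Set.indicator_of_mem hcS,
            qfun_mul_Kop_kappaE f (qfun_zero_pos_of_infinite (hc 0) hcS).ne']
        · simp [hcS]
    _ = ∑ z ∈ nbr d,
        ∫ c, (infiniteCluster d).indicator (fun c => c 0 (-z) * f (kappaE c)) c ∂P := by
        rw [integral_finsetSum _ fun z hz => integrable_indicator_apply_zero_mul hq hnn hS hz
          (h := fun c => f (kappaE (shiftE z c))) (hg.comp (measurable_shiftE z)) fun _ => hC _]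
        exact Finset.sum_congr rfl fun z hz =>
          integral_indicator_infiniteCluster_shiftE hnn hsymm (hstat z) hS hz hg
    _ = _ := by
        rw [← integral_finsetSum _ fun z hz => integrable_indicator_apply_zero_mul hq hnn hS
          (neg_mem_nbr.2 hz) (h := fun c => f (kappaE c)) hg fun _ => hC _]
        simp only [sum_nbr_indicator_apply_neg_mul]

end

theorem stmt13 (P : Measure (EnvSpace d))
    (hnn : ∀ᵐ c ∂P, ∀ x y, 0 ≤ c x y)
    (hsymm : ∀ᵐ c ∂P, ∀ x y, c x y = c y x)
    (hstat : ∀ z : Fin d → ℤ, Measure.map (shiftE z) P = P)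
    (hq : Integrable (fun c => qfun c 0) P)
    (hκmeas : Measurable (kappaE (d := d)))
    (hClmeas : MeasurableSet {c : EnvSpace d | (cluster c 0).Infinite})
    (Q : Measure (EnvSpace d))
    (hQ : Q = ((((P.withDensity (fun c => ENNReal.ofReal (qfun c 0))).restrict
        {c : EnvSpace d | (cluster c 0).Infinite}).map kappaE Set.univ)⁻¹) •
      (((P.withDensity (fun c => ENNReal.ofReal (qfun c 0))).restrict
        {c : EnvSpace d | (cluster c 0).Infinite}).map kappaE)) :
    ∀ f : EnvSpace d → ℝ, Measurable f → (∃ Cb : ℝ, ∀ π, |f π| ≤ Cb) →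
      ∫ π, Kop f π ∂Q = ∫ π, f π ∂Q := by
  rintro f hf ⟨C, hC⟩
  set μ := (P.withDensity fun c => ENNReal.ofReal (qfun c 0)).restrict
    {c : EnvSpace d | (cluster c 0).Infinite}
  suffices h : ∫ π, Kop f π ∂μ.map kappaE = ∫ π, f π ∂μ.map kappaE by
    rw [hQ, integral_smul_measure, integral_smul_measure]
    exact congrArg _ h
  have hqμ : ∀ᵐ c ∂μ, qfun c 0 ≠ 0 :=
    ae_restrict_of_ae (ae_withDensity_ofReal_ne_zero measurable_qfun_zero)
  have hKop : AEStronglyMeasurable (Kop f) (μ.map kappaE) :=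
    (Finset.measurable_fun_sum _ fun z _ => (measurable_apply_apply 0 z).mul
      (hf.comp (measurable_shiftE z))).aestronglyMeasurable.congr
      (Kop_ae_eq_sum_nbr hκmeas hqμ f).symm
  have hq0 : 0 ≤ᵐ[P] fun c => qfun c 0 := hnn.mono fun c hc => qfun_zero_nonneg (hc 0)
  rw [integral_map hκmeas.aemeasurable hKop,
    integral_map hκmeas.aemeasurable hf.aestronglyMeasurable,
    integral_restrict_withDensity_ofReal measurable_qfun_zero hq0 hClmeas,
    integral_restrict_withDensity_ofReal measurable_qfun_zero hq0 hClmeas]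
  exact integral_indicator_qfun_mul_Kop_kappaE hnn hsymm hstat hq hκmeas hClmeas hf hC

end
end

section
/- Let 0 < ε < 1, d ≥ 1, and suppose the tail condition P[η(0) ≥ t] ≥ c/(log t)^d holds for all large t, where η(0) is a nonnegative integer random variable. Define b_r := C r^{d−1} Π_{k=1}^r (1 − P[η(0) > ε^{−k}]/2)^{c' k^{d−1}} for constants C, c' > 0. If c is sufficiently large (depending on d, ε, c'), then Σ_{r≥1} b_r < ∞. -/
/-! Past some threshold, the tail bound at `t = ε^{-k} + 1 ≤ (2/ε)^k` gives
`k^{d-1} P[η(0) > ε^{-k}] ≥ a / k` with `a = c / log (2/ε)^d`. Since `1 - x ≤ e^{-x}` and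
`∑_{k ≤ r} 1/k ≥ log r - O(1)`, the product in `b_r` is `O(r^{-c' a / 2})`, so `b_r = O(r^{d-1-c' a/2})`
is summable once `c' a / 2 > d`: a direct comparison with a `p`-series instead of Raabe's test. -/

open MeasureTheory Real Filter Finset

lemma log_rpow_neg_add_one_le {ε : ℝ} (hε0 : 0 < ε) (hε1 : ε ≤ 1) {k : ℕ} (hk : 1 ≤ k) :
    log (ε ^ (-(k : ℝ)) + 1) ≤ k * log (2 / ε) := by
  have hεk : 0 < ε ^ k := pow_pos hε0 k
  have h1 : 1 ≤ (ε ^ k)⁻¹ := (one_le_inv₀ hεk).mpr (pow_le_one₀ hε0.le hε1)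
  have h2 : (2 : ℝ) ≤ 2 ^ k := by simpa using pow_le_pow_right₀ one_le_two hk
  rw [rpow_neg hε0.le, rpow_natCast, ← log_pow]
  apply log_le_log (by positivity)
  calc (ε ^ k)⁻¹ + 1 ≤ 2 * (ε ^ k)⁻¹ := by linarith
    _ ≤ 2 ^ k * (ε ^ k)⁻¹ := by gcongr
    _ = (2 / ε) ^ k := by rw [div_pow, div_eq_mul_inv]

lemma log_add_one_sub_log_le_inv {x : ℝ} (hx : 0 < x) : log (x + 1) - log x ≤ x⁻¹ := by
  rw [← log_div (by positivity) hx.ne']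
  calc log ((x + 1) / x) ≤ (x + 1) / x - 1 := log_le_sub_one_of_pos (by positivity)
    _ = x⁻¹ := by field_simp; ring

lemma log_sub_log_le_sum_Ico_inv {m : ℕ} (hm : 1 ≤ m) (n : ℕ) :
    log n - log m ≤ ∑ k ∈ Ico m n, (k : ℝ)⁻¹ := by
  induction n with
  | zero => simpa using log_nonneg (by exact_mod_cast hm : (1 : ℝ) ≤ m)
  | succ n ih =>
    rcases lt_or_ge n m with hnm | hmn
    · have hlog : log (n + 1 : ℕ) ≤ log m := log_le_log (by positivity) (by exact_mod_cast hnm)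
      rw [Ico_eq_empty_of_le hnm, sum_empty]
      linarith
    · have hstep := log_add_one_sub_log_le_inv (x := n) (by exact_mod_cast hm.trans hmn)
      rw [sum_Ico_succ_top hmn]
      push_cast
      linarith

lemma exists_mul_log_sub_le_sum_Icc {f : ℕ → ℝ} (hf : ∀ k, 0 ≤ f k) {a : ℝ} (ha : 0 ≤ a)
    (h : ∀ᶠ k : ℕ in atTop, a / k ≤ f k) :
    ∃ B, ∀ r : ℕ, a * log (r + 1) - B ≤ ∑ k ∈ Icc 1 r, f k := by
  obtain ⟨m, hm⟩ := eventually_atTop.mp h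
  refine ⟨a * log (m + 1), fun r => ?_⟩
  have hlog := log_sub_log_le_sum_Ico_inv (m := m + 1) le_add_self (r + 1)
  push_cast at hlog
  calc a * log (r + 1) - a * log (m + 1)
      ≤ ∑ k ∈ Ico (m + 1) (r + 1), a / k := by
        simpa only [← mul_sub, mul_sum, div_eq_mul_inv] using mul_le_mul_of_nonneg_left hlog ha
    _ ≤ ∑ k ∈ Ico (m + 1) (r + 1), f k := sum_le_sum fun k hk => hm k (by simp at hk; omega)
    _ ≤ ∑ k ∈ Icc 1 r, f k :=
        sum_le_sum_of_subset_of_nonneg (fun k hk => by simp at hk ⊢; omega) fun k _ _ => hf k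

lemma prod_one_sub_rpow_le_exp {ι : Type*} (s : Finset ι) {x a : ι → ℝ}
    (hx : ∀ i ∈ s, x i ≤ 1) (ha : ∀ i ∈ s, 0 ≤ a i) :
    ∏ i ∈ s, (1 - x i) ^ a i ≤ exp (-∑ i ∈ s, x i * a i) := by
  rw [← sum_neg_distrib, exp_sum]
  refine prod_le_prod (fun i hi => rpow_nonneg (by linarith [hx i hi]) _) fun i hi => ?_
  calc (1 - x i) ^ a i ≤ exp (-x i) ^ a i :=
        rpow_le_rpow (by linarith [hx i hi]) (one_sub_le_exp_neg _) (ha i hi)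
    _ = exp (-(x i * a i)) := by rw [← exp_mul, neg_mul]

lemma exists_prod_one_sub_rpow_le_mul_rpow {x : ℕ → ℝ} (hx0 : ∀ k, 0 ≤ x k)
    (hx1 : ∀ k, x k ≤ 1) (m : ℕ) {a b : ℝ} (ha : 0 ≤ a) (hb : 0 ≤ b)
    (h : ∀ᶠ k : ℕ in atTop, a / k ≤ (k : ℝ) ^ m * x k) :
    ∃ A, ∀ r : ℕ, ∏ k ∈ Icc 1 r, (1 - x k) ^ (b * (k : ℝ) ^ m) ≤ A * ((r : ℝ) + 1) ^ (-(b * a)) := by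
  obtain ⟨B, hB⟩ := exists_mul_log_sub_le_sum_Icc (fun k => by have := hx0 k; positivity) ha h
  refine ⟨exp (b * B), fun r => ?_⟩
  calc ∏ k ∈ Icc 1 r, (1 - x k) ^ (b * (k : ℝ) ^ m)
      ≤ exp (-∑ k ∈ Icc 1 r, x k * (b * (k : ℝ) ^ m)) :=
        prod_one_sub_rpow_le_exp _ (fun k _ => hx1 k) fun k _ => by positivity
    _ = exp (-(b * ∑ k ∈ Icc 1 r, (k : ℝ) ^ m * x k)) := by
        rw [mul_sum]; congr 2; exact sum_congr rfl fun k _ => by ring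
    _ ≤ exp (-(b * (a * log (r + 1) - B))) := by gcongr; exact hB r
    _ = exp (b * B) * ((r : ℝ) + 1) ^ (-(b * a)) := by
        rw [rpow_def_of_pos (by positivity), ← exp_add]; ring_nf

lemma summable_pow_mul_of_le_mul_rpow {g : ℕ → ℝ} (hg : ∀ r, 0 ≤ g r) {m : ℕ} {A s : ℝ}
    (hs : m + 1 < s) (h : ∀ r : ℕ, g r ≤ A * ((r : ℝ) + 1) ^ (-s)) :
    Summable fun r : ℕ => (r : ℝ) ^ m * g r := by
  have hmajorant : Summable fun r : ℕ => A * ((r : ℝ) + 1) ^ ((m : ℝ) - s) := by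
    have := (summable_nat_add_iff 1).mpr (summable_nat_rpow.mpr (by linarith : (m : ℝ) - s < -1))
    exact (by simpa using this : Summable fun r : ℕ => ((r : ℝ) + 1) ^ ((m : ℝ) - s)).mul_left A
  refine hmajorant.of_nonneg_of_le (fun r => mul_nonneg (by positivity) (hg r)) fun r => ?_
  calc (r : ℝ) ^ m * g r ≤ ((r : ℝ) + 1) ^ (m : ℝ) * (A * ((r : ℝ) + 1) ^ (-s)) := by
        rw [rpow_natCast]
        gcongr
        · exact hg r
        · linarith
        · exact h r
    _ = A * ((r : ℝ) + 1) ^ ((m : ℝ) - s) := by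
        rw [sub_eq_add_neg, rpow_add (by positivity)]; ring

lemma div_le_pow_sub_one_mul {k : ℕ} (hk : 1 ≤ k) (d : ℕ) {b q : ℝ} (hb : 0 ≤ b)
    (h : b / (k : ℝ) ^ d ≤ q) : b / k ≤ (k : ℝ) ^ (d - 1) * q := by
  have hk' : (1 : ℝ) ≤ k := by exact_mod_cast hk
  calc b / k = (k : ℝ) ^ (d - 1) * (b / ((k : ℝ) ^ (d - 1) * k)) := by field_simp
    _ ≤ (k : ℝ) ^ (d - 1) * (b / (k : ℝ) ^ d) := by
        gcongr
        rw [← pow_succ]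
        exact pow_le_pow_right₀ hk' (by omega)
    _ ≤ (k : ℝ) ^ (d - 1) * q := by gcongr

lemma eventually_div_le_pow_sub_one_mul_measure {Ω : Type*} [MeasurableSpace Ω]
    (P : Measure Ω) [IsFiniteMeasure P] (X : Ω → ℝ) {ε c t₀ : ℝ} (hε0 : 0 < ε) (hε1 : ε < 1)
    (hc : 0 ≤ c) (d : ℕ) (ht : ∀ t, t₀ ≤ t → c / log t ^ d ≤ (P {ω | t ≤ X ω}).toReal) :
    ∀ᶠ k : ℕ in atTop,
      c / log (2 / ε) ^ d / k ≤ (k : ℝ) ^ (d - 1) * (P {ω | ε ^ (-(k : ℝ)) < X ω}).toReal := by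
  have hlarge : ∀ᶠ k : ℕ in atTop, t₀ - 1 ≤ ε ^ (-(k : ℝ)) := by
    have := tendsto_pow_atTop_atTop_of_one_lt ((one_lt_inv₀ hε0).mpr hε1)
    filter_upwards [this.eventually_ge_atTop (t₀ - 1)] with k hk
    rwa [rpow_neg hε0.le, rpow_natCast, ← inv_pow]
  filter_upwards [hlarge, eventually_ge_atTop 1] with k hk hk1
  set x := ε ^ (-(k : ℝ))
  have hx : 0 < x := rpow_pos_of_pos hε0 _
  have hlog : 0 < log (x + 1) := log_pos (by linarith)
  have hL : 0 < log (2 / ε) := log_pos (by rw [lt_div_iff₀ hε0]; linarith)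
  refine div_le_pow_sub_one_mul hk1 d (by positivity) ?_
  calc c / log (2 / ε) ^ d / (k : ℝ) ^ d = c / (k * log (2 / ε)) ^ d := by rw [mul_pow, div_div, mul_comm]
    _ ≤ c / log (x + 1) ^ d := by
        gcongr; exact log_rpow_neg_add_one_le hε0 hε1.le hk1
    _ ≤ (P {ω | x + 1 ≤ X ω}).toReal := ht _ (by linarith)
    _ ≤ (P {ω | x < X ω}).toReal :=
        ENNReal.toReal_mono (measure_ne_top P _) (measure_mono fun ω (hω : x + 1 ≤ X ω) => by
          change x < X ω; linarith)

theorem stmt14_general (d : ℕ) (ε : ℝ) (hε0 : 0 < ε) (hε1 : ε < 1)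
    (C c' : ℝ) (hc' : 0 < c') :
    ∃ c₀ : ℝ, 0 < c₀ ∧ ∀ c : ℝ, c₀ ≤ c →
      ∀ (Ω : Type) (_ : MeasurableSpace Ω) (P : Measure Ω), IsProbabilityMeasure P →
        ∀ η : Ω → ℕ, Measurable η →
          (∃ t₀ : ℝ, ∀ t : ℝ, t₀ ≤ t →
            c / (Real.log t) ^ d ≤ (P {ω | t ≤ (η ω : ℝ)}).toReal) →
          Summable (fun r : ℕ =>
            C * (r : ℝ) ^ (d - 1) *
              ∏ k ∈ Finset.Icc 1 r,
                (1 - (P {ω | ε ^ (-(k : ℝ)) < (η ω : ℝ)}).toReal / 2) ^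
                  (c' * (k : ℝ) ^ (d - 1))) := by
  set L := log (2 / ε)
  have hL : 0 < L := log_pos (by rw [lt_div_iff₀ hε0]; linarith)
  refine ⟨2 * (d + 2) * L ^ d / c', by positivity, fun c hc Ω _ P _ η _ ⟨t₀, ht⟩ => ?_⟩
  have hc0 : 0 ≤ c := le_trans (by positivity) hc
  set p : ℕ → ℝ := fun k => (P {ω | ε ^ (-(k : ℝ)) < (η ω : ℝ)}).toReal
  have hp1 : ∀ k, p k / 2 ≤ 1 := fun k => by
    have : p k ≤ 1 := measureReal_le_one
    linarith
  have hdecay : ∀ᶠ k : ℕ in atTop, c / L ^ d / 2 / k ≤ (k : ℝ) ^ (d - 1) * (p k / 2) :=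
    (eventually_div_le_pow_sub_one_mul_measure P _ hε0 hε1 hc0 d ht).mono fun k hk => by
      rw [div_right_comm, mul_div_assoc']; gcongr
  obtain ⟨A, hA⟩ := exists_prod_one_sub_rpow_le_mul_rpow (fun k => by positivity) hp1 (d - 1)
    (by positivity) hc'.le hdecay
  have hs : ((d - 1 : ℕ) : ℝ) + 1 < c' * (c / L ^ d / 2) := by
    have hd : ((d - 1 : ℕ) : ℝ) ≤ d := by exact_mod_cast d.sub_le 1
    have : 2 * (d + 2) ≤ c' * (c / L ^ d) := by
      rw [← mul_div_assoc, le_div_iff₀ (pow_pos hL d)]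
      rwa [div_le_iff₀ hc', mul_comm c] at hc
    linarith
  simpa only [mul_assoc] using (summable_pow_mul_of_le_mul_rpow
    (fun r => prod_nonneg fun k _ => rpow_nonneg (by linarith [hp1 k]) _) hs hA).mul_left C

/-- Let `0 < ε < 1`, `d ≥ 1`, and suppose the `ℕ`-valued random variable
`η(0)` satisfies the tail bound `P[η(0) ≥ t] ≥ c/(log t)^d` for all large `t`. With
`b_r := C r^{d-1} ∏_{k=1}^r (1 - P[η(0) > ε^{-k}]/2)^{c' k^{d-1}}` for constants `C, c' > 0`,
if `c` is sufficiently large (depending on `d, ε, c'`) then `∑_{r ≥ 1} b_r < ∞`. -/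
theorem stmt14 (d : ℕ) (hd : 1 ≤ d) (ε : ℝ) (hε0 : 0 < ε) (hε1 : ε < 1)
    (C c' : ℝ) (hC : 0 < C) (hc' : 0 < c') :
    ∃ c₀ : ℝ, 0 < c₀ ∧ ∀ c : ℝ, c₀ ≤ c →
      ∀ (Ω : Type) (_ : MeasurableSpace Ω) (P : Measure Ω), IsProbabilityMeasure P →
        ∀ η : Ω → ℕ, Measurable η →
          (∃ t₀ : ℝ, ∀ t : ℝ, t₀ ≤ t →
            c / (Real.log t) ^ d ≤ (P {ω | t ≤ (η ω : ℝ)}).toReal) →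
          Summable (fun r : ℕ =>
            C * (r : ℝ) ^ (d - 1) *
              ∏ k ∈ Finset.Icc 1 r,
                (1 - (P {ω | ε ^ (-(k : ℝ)) < (η ω : ℝ)}).toReal / 2) ^
                  (c' * (k : ℝ) ^ (d - 1))) :=
  stmt14_general d ε hε0 hε1 C c' hc'
end

section
/- Let d = 1 and consider a frog model on ℤ where each frog performs an irreducible Markov chain whose every trajectory started at 0 almost surely visits all of ℕ or all of −ℕ (e.g. a nearest-neighbor walk on ℤ with steps ±1). Let (η(x))_{x∈ℤ} be i.i.d. with E[log₊ η(0)] = ∞, independent of the frog trajectories, and suppose each frog started at x hits 0 with probability at least ε^{|x|} for some ε ∈ (0,1). Then waking the frogs at 0 results almost surely in 0 being visited by frogs from infinitely many distinct sites. -/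
/-!
Given `η`, the frogs hit `0` independently, a frog from `x` with probability at least `ε ^ |x|`.
Since `E[log₊ η(0)] = ∞`, the second Borel–Cantelli lemma gives `η(φ n) > ε⁻¹ ^ n` for infinitely
many `n` almost surely, along either ray `φ n = n` or `φ n = -n`. At such a site the first
`⌈ε⁻¹ ^ n⌉` frogs all miss `0` with conditional probability at most `e⁻¹`, independently over the
sites. Conditioning on which sites of a window `[N, L]` carry that many frogs turns this into a
Borel–Cantelli argument: infinitely many of these sites send a frog to `0`. Finally the first frog
at `0` covers one of the two rays, so every site on it is woken up.
-/

open MeasureTheory ProbabilityTheory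

/-- The set `W_j^v(n,s)` of sites visited for the first time at time `j` by an active frog. -/
def frogW {V : Type*} (n : V → ℕ) (s : ℕ → V → ℕ → V) (v : V) : ℕ → Set V
  | 0 => {v}
  | j + 1 =>
    {x | (∀ k, ∀ _ : k < j + 1, x ∉ frogW n s v k) ∧
      ∃ k, ∃ _ : k < j + 1, ∃ y ∈ frogW n s v k, ∃ i, 1 ≤ i ∧ i ≤ n y ∧ s (j + 1 - k) y i = x}

open Filter Finset
open scoped ENNReal

lemma mem_iUnion_frogW {V : Type*} {n : V → ℕ} {s : ℕ → V → ℕ → V} {v y : V} {k i : ℕ}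
    (hy : y ∈ frogW n s v k) (hi : 1 ≤ i) (hin : i ≤ n y) (hs0 : s 0 y i = y) (t : ℕ) :
    s t y i ∈ ⋃ j, frogW n s v j := by
  rcases t with _ | t
  · rw [hs0]
    exact Set.mem_iUnion.2 ⟨k, hy⟩
  by_contra h
  simp only [Set.mem_iUnion, not_exists] at h
  apply h (k + t + 1)
  rw [frogW]
  refine ⟨fun k' _ => h k', k, by omega, y, hy, i, hi, hin, ?_⟩
  rw [show k + t + 1 - k = t + 1 by omega]

lemma ofReal_le_tsum_indicator_lt (x : ℝ) :
    ENNReal.ofReal x ≤ ∑' n : ℕ, {y : ℝ | (n : ℝ) < y}.indicator 1 x := by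
  calc ENNReal.ofReal x ≤ ⌈x⌉₊ := by
        rw [← ENNReal.ofReal_natCast]; exact ENNReal.ofReal_le_ofReal (Nat.le_ceil x)
    _ = ∑ _ ∈ range ⌈x⌉₊, (1 : ℝ≥0∞) := by simp
    _ = ∑ n ∈ range ⌈x⌉₊, {y : ℝ | (n : ℝ) < y}.indicator 1 x :=
        Finset.sum_congr rfl fun n hn => by
          rw [Set.indicator_of_mem (s := {y : ℝ | (n : ℝ) < y}) (Nat.lt_ceil.1 (mem_range.1 hn)),
            Pi.one_apply]
    _ ≤ _ := ENNReal.sum_le_tsum _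

theorem tsum_measure_lt_eq_top_of_not_integrable {Ω : Type*} {mΩ : MeasurableSpace Ω}
    {P : Measure Ω} {X : Ω → ℝ} (hX : Measurable X) (hX0 : 0 ≤ X) (hint : ¬ Integrable X P) :
    ∑' n : ℕ, P {ω | (n : ℝ) < X ω} = ∞ := by
  contrapose! hint
  refine ⟨hX.aestronglyMeasurable, (hasFiniteIntegral_iff_ofReal (.of_forall hX0)).2 ?_⟩
  have hmeas (n : ℕ) : MeasurableSet {ω | (n : ℝ) < X ω} := measurableSet_lt measurable_const hX
  calc ∫⁻ ω, ENNReal.ofReal (X ω) ∂P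
      ≤ ∫⁻ ω, ∑' n : ℕ, {ω | (n : ℝ) < X ω}.indicator 1 ω ∂P :=
        lintegral_mono fun ω => ofReal_le_tsum_indicator_lt (X ω)
    _ = ∑' n : ℕ, ∫⁻ ω, {ω | (n : ℝ) < X ω}.indicator 1 ω ∂P :=
        lintegral_tsum fun n => (measurable_const.indicator (hmeas n)).aemeasurable
    _ = ∑' n : ℕ, P {ω | (n : ℝ) < X ω} := by simp_rw [lintegral_indicator_one (hmeas _)]
    _ < ∞ := hint.lt_top

lemma pow_lt_natCast_iff_lt_logb {b : ℝ} (hb : 1 < b) (n k : ℕ) :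
    b ^ n < k ↔ (n : ℝ) < Real.logb b (max k 1) := by
  rw [Real.lt_logb_iff_rpow_lt hb (by positivity), Real.rpow_natCast, lt_max_iff,
    or_iff_left (one_le_pow₀ hb.le).not_gt]

theorem ae_frequently_pow_lt_of_not_integrable_log {Ω : Type*} {mΩ : MeasurableSpace Ω}
    {P : Measure Ω} [IsProbabilityMeasure P] {X : ℕ → Ω → ℕ} {X₀ : Ω → ℕ}
    (hX : ∀ n, Measurable (X n)) (hX₀ : Measurable X₀) (hind : iIndepFun X P)
    (hid : ∀ n, IdentDistrib (X n) X₀ P P)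
    (hint : ¬ Integrable (fun ω => Real.log (max (X₀ ω : ℝ) 1)) P) {b : ℝ} (hb : 1 < b) :
    ∀ᵐ ω ∂P, ∃ᶠ n in atTop, b ^ n < X n ω := by
  set G : ℕ → Set Ω := fun n => X n ⁻¹' {k | b ^ n < k}
  have hG : ∀ n, MeasurableSet (G n) := fun n => hX n (.of_discrete)
  have hindG : iIndepSet G P :=
    iIndepSets.iIndepSet_of_mem (π := fun n => {s | MeasurableSet[.comap (X n) ⊤] s})
      (fun n => ⟨_, .of_discrete, rfl⟩) hG hind
  have hlogb : ¬ Integrable (fun ω => Real.logb b (max (X₀ ω : ℝ) 1)) P := fun h =>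
    hint <| (h.mul_const (Real.log b)).congr (.of_forall fun ω => by
      simp only [Real.logb, div_mul_cancel₀ _ (Real.log_pos hb).ne'])
  have hsum : ∑' n, P (G n) = ∞ := by
    rw [← tsum_measure_lt_eq_top_of_not_integrable
      ((measurable_from_nat (f := fun k : ℕ => Real.logb b (max (k : ℝ) 1))).comp hX₀)
      (fun ω => Real.logb_nonneg hb (le_max_right _ _)) hlogb]
    refine tsum_congr fun n => ((hid n).measure_mem_eq .of_discrete).trans ?_
    simp_rw [Set.preimage_ofPred_eq, pow_lt_natCast_iff_lt_logb hb]
    rfl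
  have hlimsup : limsup G atTop ∈ ae P := mem_ae_iff.2 <|
    (prob_compl_eq_zero_iff (.measurableSet_limsup hG)).2 (measure_limsup_eq_one hG hindG hsum)
  filter_upwards [hlimsup] with ω hω using mem_limsup_iff_frequently_mem.1 hω

lemma condExp_compl_ae_eq {Ω : Type*} {m mΩ : MeasurableSpace Ω} (hm : m ≤ mΩ)
    {P : Measure Ω} [IsFiniteMeasure P] {s : Set Ω} (hs : MeasurableSet s) :
    P⟦sᶜ | m⟧ =ᵐ[P] 1 - P⟦s | m⟧ := by
  rw [Set.indicator_compl]
  refine (condExp_sub (integrable_const _) ((integrable_const _).indicator hs) m).trans ?_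
  rw [condExp_const hm]
  rfl

theorem condExp_biInter_compl_le_prod {Ω ι : Type*} {m mΩ : MeasurableSpace Ω}
    [StandardBorelSpace Ω] (hm : m ≤ mΩ) {P : Measure Ω} [IsFiniteMeasure P] {H : ι → Set Ω}
    (hH : ∀ i, MeasurableSet (H i)) (hind : iCondIndepSet m hm H P) (F : Finset ι) {c : ι → ℝ}
    (hc : ∀ i ∈ F, ∀ᵐ ω ∂P, c i ≤ (P⟦H i | m⟧) ω) :
    P⟦⋂ i ∈ F, (H i)ᶜ | m⟧ ≤ᵐ[P] fun _ => ∏ i ∈ F, (1 - c i) := by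
  have hprod : P⟦⋂ i ∈ F, (H i)ᶜ | m⟧ =ᵐ[P] ∏ i ∈ F, P⟦(H i)ᶜ | m⟧ :=
    (iCondIndep_iff m hm _ (fun i => MeasurableSpace.generateFrom_le
      fun t (ht : t = H i) => ht ▸ hH i) P).1 ((iCondIndepSet_iff_iCondIndep m hm H P).1 hind) F
        fun i _ => (MeasurableSpace.measurableSet_generateFrom (Set.mem_singleton (H i))).compl
  have hfactor : ∀ᵐ ω ∂P, ∀ i ∈ F, 0 ≤ (P⟦(H i)ᶜ | m⟧) ω ∧ (P⟦(H i)ᶜ | m⟧) ω ≤ 1 - c i := by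
    refine eventually_all_finset _ |>.2 fun i hi => ?_
    have hnonneg : 0 ≤ᵐ[P] (H i)ᶜ.indicator fun _ => (1 : ℝ) :=
      .of_forall (Set.indicator_nonneg fun _ _ => zero_le_one)
    filter_upwards [condExp_nonneg (m := m) hnonneg, condExp_compl_ae_eq hm (hH i), hc i hi]
      with ω h0 h1 h2
    refine ⟨h0, ?_⟩
    rw [h1, Pi.sub_apply, Pi.one_apply]
    linarith
  filter_upwards [hprod, hfactor] with ω h1 h2
  rw [h1, Finset.prod_apply]
  exact prod_le_prod (fun i hi => (h2 i hi).1) fun i hi => (h2 i hi).2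

theorem measure_inter_le_of_condExp_le {Ω : Type*} {m mΩ : MeasurableSpace Ω} (hm : m ≤ mΩ)
    {P : Measure Ω} [IsFiniteMeasure P] {s X : Set Ω} (hs : MeasurableSet[m] s)
    (hX : MeasurableSet X) {c : ℝ} (hc : P⟦X | m⟧ ≤ᵐ[P] fun _ => c) :
    P (s ∩ X) ≤ ENNReal.ofReal c * P s := by
  have hint : Integrable (X.indicator fun _ => (1 : ℝ)) P := (integrable_const 1).indicator hX
  have hreal : P.real (s ∩ X) ≤ c * P.real s :=
    calc P.real (s ∩ X) = ∫ ω in s, X.indicator (fun _ => (1 : ℝ)) ω ∂P := by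
          simp [integral_indicator hX, Measure.restrict_restrict hX, Set.inter_comm]
      _ = ∫ ω in s, (P⟦X | m⟧) ω ∂P := (setIntegral_condExp hm hint hs).symm
      _ ≤ ∫ _ in s, c ∂P :=
          integral_mono_ae integrable_condExp.restrict (integrable_const c) (ae_restrict_of_ae hc)
      _ = c * P.real s := by rw [setIntegral_const, smul_eq_mul, mul_comm]
  calc P (s ∩ X) = ENNReal.ofReal (P.real (s ∩ X)) := (ofReal_measureReal).symm
    _ ≤ ENNReal.ofReal (c * P.real s) := ENNReal.ofReal_le_ofReal hreal
    _ = ENNReal.ofReal c * P s := by rw [ENNReal.ofReal_mul' measureReal_nonneg, ofReal_measureReal]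

section ConditionalBorelCantelli

open scoped Classical

variable {Ω : Type*} {m mΩ : MeasurableSpace Ω} {P : Measure Ω} [IsProbabilityMeasure P]
  {G Y : ℕ → Set Ω} {q : ℝ}

lemma measurableSet_setOf_filter_eq (hG : ∀ n, MeasurableSet[m] (G n)) {I E : Finset ℕ}
    (hE : E ⊆ I) : MeasurableSet[m] {ω | I.filter (fun n => ω ∈ G n) = E} := by
  have : {ω | I.filter (fun n => ω ∈ G n) = E} = ⋂ n ∈ I, {ω | ω ∈ G n ↔ n ∈ E} := by
    ext ω
    simp only [Set.mem_ofPred_eq, Set.mem_iInter, Finset.ext_iff, Finset.mem_filter]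
    exact ⟨fun h n hn => by rw [← h n]; tauto, fun h n => by specialize h n; have := @hE n; tauto⟩
  rw [this]
  refine .biInter I.countable_toSet fun n _ => ?_
  by_cases hn : n ∈ E <;> simp only [hn, iff_true, iff_false]
  exacts [hG n, (hG n).compl]

lemma measure_le_card_filter_inter_le (hm : m ≤ mΩ) (hG : ∀ n, MeasurableSet[m] (G n))
    (hY : ∀ n, MeasurableSet (Y n)) (hq0 : 0 ≤ q) (hq1 : q ≤ 1)
    (hGY : ∀ E : Finset ℕ, P⟦⋂ n ∈ E, Y n | m⟧ ≤ᵐ[P] fun _ => q ^ #E) (I : Finset ℕ) (k : ℕ) :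
    P ({ω | k ≤ #(I.filter fun n => ω ∈ G n)} ∩ {ω | ∀ n ∈ I, ω ∈ G n → ω ∈ Y n})
      ≤ ENNReal.ofReal (q ^ k) := by
  set Z : Ω → Finset ℕ := fun ω => I.filter fun n => ω ∈ G n
  set S := I.powerset.filter fun E => k ≤ #E
  -- Split according to the exact set `Z ω` of indices where `G` occurs: its fibres are
  -- `m`-measurable, so on each of them the conditional bound applies to a fixed intersection.
  have hcover : {ω | k ≤ #(Z ω)} ∩ {ω | ∀ n ∈ I, ω ∈ G n → ω ∈ Y n}
      ⊆ ⋃ E ∈ S, Z ⁻¹' {E} ∩ ⋂ n ∈ E, Y n := by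
    rintro ω ⟨hk, hY⟩
    simp only [Set.mem_iUnion, Set.mem_inter_iff, Set.mem_iInter]
    refine ⟨Z ω, mem_filter.2 ⟨mem_powerset.2 (filter_subset _ _), hk⟩, rfl, fun n hn => ?_⟩
    exact hY n (mem_filter.1 hn).1 (mem_filter.1 hn).2
  have hfiber : ∀ E ∈ S, MeasurableSet[m] (Z ⁻¹' {E}) := fun E hE =>
    measurableSet_setOf_filter_eq hG (mem_powerset.1 (mem_filter.1 hE).1)
  calc _ ≤ ∑ E ∈ S, P (Z ⁻¹' {E} ∩ ⋂ n ∈ E, Y n) :=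
        (measure_mono hcover).trans (measure_biUnion_finset_le S _)
    _ ≤ ∑ E ∈ S, ENNReal.ofReal (q ^ k) * P (Z ⁻¹' {E}) := by
        refine sum_le_sum fun E hE => measure_inter_le_of_condExp_le hm (hfiber E hE)
          (.biInter E.countable_toSet fun n _ => hY n) ((hGY E).mono fun ω hω => ?_)
        exact hω.trans (pow_le_pow_of_le_one hq0 hq1 (mem_filter.1 hE).2)
    _ = ENNReal.ofReal (q ^ k) * P (Z ⁻¹' S) := by
        rw [← mul_sum, sum_measure_preimage_singleton S fun E hE => hm _ (hfiber E hE)]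
    _ ≤ ENNReal.ofReal (q ^ k) := mul_le_of_le_one_right' prob_le_one

lemma exists_le_card_filter_Icc {p : ℕ → Prop} [DecidablePred p] (hp : ∃ᶠ n in atTop, p n)
    (N k : ℕ) : ∃ L, k ≤ #((Icc N L).filter p) := by
  obtain ⟨t, ht, rfl⟩ := (Nat.frequently_atTop_iff_infinite.1
    (hp.and_eventually (eventually_ge_atTop N))).exists_subset_card_eq k
  refine ⟨t.sup id, card_le_card fun n hn => ?_⟩
  obtain ⟨hpn, hNn⟩ := ht hn
  exact mem_filter.2 ⟨mem_Icc.2 ⟨hNn, le_sup (f := id) hn⟩, hpn⟩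

theorem ae_frequently_mem_not_mem_of_condExp_biInter_le (hm : m ≤ mΩ)
    (hG : ∀ n, MeasurableSet[m] (G n)) (hY : ∀ n, MeasurableSet (Y n)) (hq0 : 0 ≤ q)
    (hq1 : q < 1) (hGY : ∀ E : Finset ℕ, P⟦⋂ n ∈ E, Y n | m⟧ ≤ᵐ[P] fun _ => q ^ #E) :
    ∀ᵐ ω ∂P, (∃ᶠ n in atTop, ω ∈ G n) → ∃ᶠ n in atTop, ω ∈ G n ∧ ω ∉ Y n := by
  set Bad : ℕ → Set Ω := fun N => {ω | ∀ n ≥ N, ω ∈ G n → ω ∈ Y n}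
  suffices hnull : ∀ N, P ({ω | ∃ᶠ n in atTop, ω ∈ G n} ∩ Bad N) = 0 by
    filter_upwards [ae_all_iff.2 fun N => measure_eq_zero_iff_ae_notMem.1 (hnull N)]
      with ω hω hfreq
    refine frequently_atTop.2 fun N => ?_
    by_contra! hY
    exact hω N ⟨hfreq, hY⟩
  intro N
  set A : ℕ → ℕ → Set Ω := fun k L => {ω | k ≤ #((Icc N L).filter fun n => ω ∈ G n)} ∩ Bad N
  have hA : ∀ k L, P (A k L) ≤ ENNReal.ofReal (q ^ k) := by
    refine fun k L => (measure_mono (Set.inter_subset_inter_right _ ?_)).trans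
      (measure_le_card_filter_inter_le hm hG hY hq0 hq1.le hGY (Icc N L) k)
    exact fun ω hω n hn => hω n (mem_Icc.1 hn).1
  have hmono : ∀ k, Monotone (A k) := fun k L L' hL =>
    Set.inter_subset_inter_left _ fun ω hω => hω.trans (card_le_card
      (filter_subset_filter _ (Icc_subset_Icc_right hL)))
  have hcover : ∀ k, {ω | ∃ᶠ n in atTop, ω ∈ G n} ∩ Bad N ⊆ ⋃ L, A k L := by
    rintro k ω ⟨hfreq, hbad⟩
    obtain ⟨L, hL⟩ := exists_le_card_filter_Icc hfreq N k
    exact Set.mem_iUnion.2 ⟨L, hL, hbad⟩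
  have hlim : Tendsto (fun k => ENNReal.ofReal (q ^ k)) atTop (nhds 0) := by
    simpa using ENNReal.tendsto_ofReal (tendsto_pow_atTop_nhds_zero_of_lt_one hq0 hq1)
  refine le_antisymm (ge_of_tendsto' hlim fun k => ?_) bot_le
  calc _ ≤ P (⋃ L, A k L) := measure_mono (hcover k)
    _ = ⨆ L, P (A k L) := (hmono k).measure_iUnion
    _ ≤ _ := iSup_le (hA k)

end ConditionalBorelCantelli

lemma one_sub_pow_ceil_inv_le {x : ℝ} (hx0 : 0 < x) (hx1 : x ≤ 1) :
    (1 - x) ^ ⌈x⁻¹⌉₊ ≤ Real.exp (-1) := by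
  calc (1 - x) ^ ⌈x⁻¹⌉₊ ≤ Real.exp (-x) ^ ⌈x⁻¹⌉₊ :=
        pow_le_pow_left₀ (by linarith) (by linarith [Real.add_one_le_exp (-x)]) _
    _ = Real.exp (-(x * ⌈x⁻¹⌉₊)) := by rw [← Real.exp_nat_mul]; ring_nf
    _ ≤ Real.exp (-1) := by
        gcongr
        calc (1 : ℝ) = x * x⁻¹ := (mul_inv_cancel₀ hx0.ne').symm
          _ ≤ x * ⌈x⁻¹⌉₊ := by gcongr; exact Nat.le_ceil _

section FrogsAtDistantSites

variable {Ω : Type*} {m mΩ : MeasurableSpace Ω} [StandardBorelSpace Ω] (hm : m ≤ mΩ)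
  {P : Measure Ω} [IsProbabilityMeasure P] {H : ℤ × ℕ → Set Ω} {ε : ℝ} {φ : ℕ → ℤ}

theorem condExp_biInter_compl_le_exp_neg_card (hH : ∀ p, MeasurableSet (H p))
    (hcond : iCondIndepSet m hm H P) (hε0 : 0 < ε) (hε1 : ε < 1)
    (hhit : ∀ x i, 1 ≤ i → ∀ᵐ ω ∂P, ε ^ x.natAbs ≤ (P⟦H (x, i) | m⟧) ω)
    (hφ : ∀ n, (φ n).natAbs = n) (E : Finset ℕ) :
    P⟦⋂ n ∈ E, ⋂ i ∈ Icc 1 ⌈(ε ^ n)⁻¹⌉₊, (H (φ n, i))ᶜ | m⟧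
      ≤ᵐ[P] fun _ => Real.exp (-1) ^ #E := by
  set F := E.sigma fun n => Icc 1 ⌈(ε ^ n)⁻¹⌉₊
  set H' : (Σ _ : ℕ, ℕ) → Set Ω := fun p => H (φ p.1, p.2)
  have hcond' : iCondIndepSet m hm H' P := by
    refine Kernel.iIndepSet.precomp (g := fun p : (Σ _ : ℕ, ℕ) => (φ p.1, p.2)) ?_ hcond
    rintro ⟨a, i⟩ ⟨b, j⟩ h
    obtain ⟨hab, rfl⟩ := Prod.mk.inj h
    obtain rfl : a = b := Function.LeftInverse.injective hφ hab
    rfl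
  have hinter : ⋂ n ∈ E, ⋂ i ∈ Icc 1 ⌈(ε ^ n)⁻¹⌉₊, (H (φ n, i))ᶜ = ⋂ p ∈ F, (H' p)ᶜ := by
    ext ω
    simp only [F, H', Set.mem_iInter, mem_sigma, mem_Icc, Sigma.forall]
    grind
  have hε1' (n : ℕ) : ε ^ n ≤ 1 := pow_le_one₀ hε0.le hε1.le
  rw [hinter]
  refine (condExp_biInter_compl_le_prod hm (fun p => hH _) hcond' F
    (c := fun p => ε ^ p.1) fun p hp => ?_).mono fun ω hω => hω.trans ?_
  · simpa [H', hφ] using hhit (φ p.1) p.2 (mem_Icc.1 (mem_sigma.1 hp).2).1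
  calc ∏ p ∈ F, (1 - ε ^ p.1) = ∏ n ∈ E, (1 - ε ^ n) ^ ⌈(ε ^ n)⁻¹⌉₊ := by simp [F, prod_sigma]
    _ ≤ ∏ _n ∈ E, Real.exp (-1) := prod_le_prod
        (fun n _ => pow_nonneg (sub_nonneg.2 (hε1' n)) _)
        fun n _ => one_sub_pow_ceil_inv_le (pow_pos hε0 n) (hε1' n)
    _ = Real.exp (-1) ^ #E := prod_const _

theorem ae_frequently_exists_mem_of_iCondIndepSet {η : ℤ → Ω → ℕ}
    (hηm : ∀ x, Measurable[m] (η x)) (hind : iIndepFun η P)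
    (hid : ∀ x, IdentDistrib (η x) (η 0) P P)
    (hint : ¬ Integrable (fun ω => Real.log (max (η 0 ω : ℝ) 1)) P)
    (hH : ∀ p, MeasurableSet (H p)) (hcond : iCondIndepSet m hm H P) (hε0 : 0 < ε) (hε1 : ε < 1)
    (hhit : ∀ x i, 1 ≤ i → ∀ᵐ ω ∂P, ε ^ x.natAbs ≤ (P⟦H (x, i) | m⟧) ω)
    (hφ : ∀ n, (φ n).natAbs = n) :
    ∀ᵐ ω ∂P, ∃ᶠ n in atTop, ∃ i, 1 ≤ i ∧ i ≤ η (φ n) ω ∧ ω ∈ H (φ n, i) := by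
  set G : ℕ → Set Ω := fun n => {ω | ε⁻¹ ^ n < η (φ n) ω}
  set Y : ℕ → Set Ω := fun n => ⋂ i ∈ Icc 1 ⌈(ε ^ n)⁻¹⌉₊, (H (φ n, i))ᶜ
  have hG : ∀ n, MeasurableSet[m] (G n) := fun n => hηm (φ n)
    (MeasurableSet.of_discrete : MeasurableSet {k : ℕ | ε⁻¹ ^ n < (k : ℝ)})
  have hY : ∀ n, MeasurableSet (Y n) := fun n =>
    .biInter (Set.to_countable _) fun i _ => (hH _).compl
  have hfreqG : ∀ᵐ ω ∂P, ∃ᶠ n in atTop, ω ∈ G n :=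
    ae_frequently_pow_lt_of_not_integrable_log (X := fun n => η (φ n))
      (fun n => (hηm _).mono hm le_rfl) ((hηm 0).mono hm le_rfl)
      (hind.precomp (Function.LeftInverse.injective hφ)) (fun n => hid (φ n)) hint
      (one_lt_inv_iff₀.2 ⟨hε0, hε1⟩)
  filter_upwards [hfreqG, ae_frequently_mem_not_mem_of_condExp_biInter_le hm hG hY
    (Real.exp_pos (-1)).le (Real.exp_lt_one_iff.2 (by norm_num))
    (condExp_biInter_compl_le_exp_neg_card hm hH hcond hε0 hε1 hhit hφ)] with ω hG' hBC
  refine (hBC hG').mono fun n ⟨hGn, hYn⟩ => ?_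
  simp only [Y, Set.mem_iInter, not_forall, Set.notMem_compl_iff, mem_Icc] at hYn
  obtain ⟨i, ⟨hi1, hiM⟩, hiH⟩ := hYn
  refine ⟨i, hi1, hiM.trans (Nat.ceil_le.2 ?_), hiH⟩
  rw [← inv_pow]
  exact hGn.le

end FrogsAtDistantSites

theorem stmt18_general {Ω : Type*} {mΩ : MeasurableSpace Ω} [StandardBorelSpace Ω]
    (P : Measure Ω) [IsProbabilityMeasure P]
    (η : ℤ → Ω → ℕ)
    (hηiid : ProbabilityTheory.iIndepFun η P)
    (hηid : ∀ x, ProbabilityTheory.IdentDistrib (η x) (η 0) P P)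
    (hηinf : ¬ Integrable (fun ω => Real.log (max (η 0 ω : ℝ) 1)) P)
    (S : ℕ → ℤ → ℕ → Ω → ℤ) (hSmeas : ∀ j x i, Measurable (S j x i))
    (hS0 : ∀ x i ω, S 0 x i ω = x)
    (hcover : ∀ i : ℕ, 1 ≤ i →
      ∀ᵐ ω ∂P, (∀ m : ℕ, ∃ j, S j 0 i ω = (m : ℤ)) ∨ (∀ m : ℕ, ∃ j, S j 0 i ω = -(m : ℤ)))
    (ε : ℝ) (hε0 : 0 < ε) (hε1 : ε < 1)
    (hmηle : MeasurableSpace.comap (fun ω => fun x : ℤ => η x ω) inferInstance ≤ mΩ)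
    (hcondindep : ProbabilityTheory.iCondIndepSet
      (MeasurableSpace.comap (fun ω => fun x : ℤ => η x ω) inferInstance) hmηle
      (fun p : ℤ × ℕ => {ω | ∃ j, S j p.1 p.2 ω = 0}) P)
    (hhit : ∀ (x : ℤ) (i : ℕ), 1 ≤ i →
      ∀ᵐ ω ∂P, ε ^ x.natAbs ≤
        (MeasureTheory.condExp
          (MeasurableSpace.comap (fun ω' => fun x' : ℤ => η x' ω') inferInstance) P
          (Set.indicator {ω' | ∃ j, S j x i ω' = 0} fun _ => (1 : ℝ))) ω) :
    ∀ᵐ ω ∂P, 1 ≤ η 0 ω →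
      {x : ℤ | (x ∈ ⋃ j : ℕ, frogW (fun z => η z ω) (fun j z i => S j z i ω) 0 j) ∧
        ∃ i, 1 ≤ i ∧ i ≤ η x ω ∧ ∃ j, S j x i ω = 0}.Infinite := by
  have hηm : ∀ x, Measurable[MeasurableSpace.comap (fun ω => fun x : ℤ => η x ω) inferInstance]
      (η x) := fun x => (measurable_pi_apply x).comp (comap_measurable fun ω x => η x ω)
  have hH : ∀ p : ℤ × ℕ, MeasurableSet {ω | ∃ j, S j p.1 p.2 ω = 0} := fun p => by
    simp only [Set.ofPred_exists]
    exact .iUnion fun j => hSmeas j p.1 p.2 (measurableSet_singleton 0)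
  have hray : ∀ φ : ℕ → ℤ, (∀ n, (φ n).natAbs = n) → ∀ᵐ ω ∂P, 1 ≤ η 0 ω →
      (∀ n, ∃ j, S j 0 1 ω = φ n) →
      {x : ℤ | (x ∈ ⋃ j : ℕ, frogW (fun z => η z ω) (fun j z i => S j z i ω) 0 j) ∧
        ∃ i, 1 ≤ i ∧ i ≤ η x ω ∧ ∃ j, S j x i ω = 0}.Infinite := by
    intro φ hφ
    filter_upwards [ae_frequently_exists_mem_of_iCondIndepSet hmηle hηm hηiid hηid hηinf hH
      hcondindep hε0 hε1 hhit hφ] with ω hfreq h0 hcov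
    refine ((Nat.frequently_atTop_iff_infinite.1 hfreq).image
      (Function.LeftInverse.injective hφ).injOn).mono ?_
    rintro _ ⟨n, hn, rfl⟩
    obtain ⟨j, hj⟩ := hcov n
    refine ⟨?_, hn⟩
    rw [← hj]
    exact mem_iUnion_frogW (n := fun z => η z ω) (s := fun j z i => S j z i ω) (k := 0)
      (by rw [frogW]; exact Set.mem_singleton _) le_rfl h0 (hS0 0 1 ω) j
  filter_upwards [hray _ Int.natAbs_natCast, hray (fun n => -(n : ℤ)) (by simp),
    hcover 1 le_rfl] with ω hpos hneg hcov h0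
  exact hcov.elim (hpos h0) (hneg h0)

/-- One-dimensional frog model: each frog trajectory started at `0` a.s.
covers all of `ℕ` or all of `-ℕ`; the frog numbers `(η x)_{x ∈ ℤ}` are i.i.d. with
`E[log₊ η(0)] = ∞` and independent of the trajectories; and each frog started at `x` hits `0`
with conditional probability (given `η`) at least `ε^{|x|}`, independently over the frogs.
Then, waking the frogs at `0`, almost surely `0` is visited by frogs from infinitely many
distinct sites. -/
theorem stmt18 {Ω : Type*} {mΩ : MeasurableSpace Ω} [StandardBorelSpace Ω]
    (P : Measure Ω) [IsProbabilityMeasure P]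
    (η : ℤ → Ω → ℕ) (hηmeas : ∀ x, Measurable (η x))
    (hηiid : ProbabilityTheory.iIndepFun η P)
    (hηid : ∀ x, ProbabilityTheory.IdentDistrib (η x) (η 0) P P)
    (hηinf : ¬ Integrable (fun ω => Real.log (max (η 0 ω : ℝ) 1)) P)
    (S : ℕ → ℤ → ℕ → Ω → ℤ) (hSmeas : ∀ j x i, Measurable (S j x i))
    (hS0 : ∀ x i ω, S 0 x i ω = x)
    (hηSindep : ProbabilityTheory.Indep
      (MeasurableSpace.comap (fun ω => fun x : ℤ => η x ω) inferInstance)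
      (MeasurableSpace.comap (fun ω => fun p : ℕ × ℤ × ℕ => S p.1 p.2.1 p.2.2 ω)
        inferInstance) P)
    (hcover : ∀ i : ℕ, 1 ≤ i →
      ∀ᵐ ω ∂P, (∀ m : ℕ, ∃ j, S j 0 i ω = (m : ℤ)) ∨ (∀ m : ℕ, ∃ j, S j 0 i ω = -(m : ℤ)))
    (ε : ℝ) (hε0 : 0 < ε) (hε1 : ε < 1)
    (hmηle : MeasurableSpace.comap (fun ω => fun x : ℤ => η x ω) inferInstance ≤ mΩ)
    (hcondindep : ProbabilityTheory.iCondIndepSet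
      (MeasurableSpace.comap (fun ω => fun x : ℤ => η x ω) inferInstance) hmηle
      (fun p : ℤ × ℕ => {ω | ∃ j, S j p.1 p.2 ω = 0}) P)
    (hhit : ∀ (x : ℤ) (i : ℕ), 1 ≤ i →
      ∀ᵐ ω ∂P, ε ^ x.natAbs ≤
        (MeasureTheory.condExp
          (MeasurableSpace.comap (fun ω' => fun x' : ℤ => η x' ω') inferInstance) P
          (Set.indicator {ω' | ∃ j, S j x i ω' = 0} fun _ => (1 : ℝ))) ω) :
    ∀ᵐ ω ∂P, 1 ≤ η 0 ω →
      {x : ℤ | (x ∈ ⋃ j : ℕ, frogW (fun z => η z ω) (fun j z i => S j z i ω) 0 j) ∧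
        ∃ i, 1 ≤ i ∧ i ≤ η x ω ∧ ∃ j, S j x i ω = 0}.Infinite :=
  stmt18_general P η hηiid hηid hηinf S hSmeas hS0 hcover ε hε0 hε1 hmηle hcondindep hhit
end
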